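/- arXiv:2412.01785 — 6 statements merged into one kernel-verified Lean document; each statement's English description precedes it below -/
import Mathlib

section
/- Let A be a commutative ring of characteristic p > 0 that has a p-basis. Then for a ∈ A, the Kähler differential da = 0 in Ω¹_{A/ℤ} if and only if a is a p-th power in A. -/
/-- A `p`-basis of a commutative ring `A` of characteristic `p`: a subset `Γ ⊆ A` such that
`A^p[Γ] = A` and for any finitely many distinct elements `a₁, …, a_k ∈ Γ` the monomials
`a₁^{i₁} ⋯ a_k^{i_k}` with `0 ≤ i_j ≤ p − 1` are linearly independent over the subring `A^p`
of `p`-th powers. -/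
def IsPBasis (p : ℕ) {A : Type*} [CommRing A] (Γ : Set A) : Prop :=
  Subring.closure ((Set.range fun a : A => a ^ p) ∪ Γ) = ⊤ ∧
  ∀ (k : ℕ) (a : Fin k → A), Function.Injective a → (∀ i, a i ∈ Γ) →
    ∀ c : (Fin k → Fin p) → A,
      (∀ m, c m ∈ Subring.closure (Set.range fun x : A => x ^ p)) →
      (∑ m : Fin k → Fin p, c m * ∏ i, a i ^ (m i : ℕ)) = 0 →
      ∀ m, c m = 0

open MvPolynomial

section PBAux

variable (p : ℕ) [Fact p.Prime] {A : Type*} [CommRing A] [CharP A p] (Γ : Set A)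

/-- The subring of `p`-th powers. -/
noncomputable def Bsub : Subring A := (frobenius A p).range

lemma closure_eq_Bsub :
    Subring.closure (Set.range fun a : A => a ^ p) = (Bsub p : Subring A) := by
  have h : (Set.range fun a : A => a ^ p) = ((Bsub p : Subring A) : Set A) := by
    ext x
    simp only [Set.mem_range, SetLike.mem_coe, Bsub, RingHom.mem_range, frobenius_def]
  rw [h, Subring.closure_eq]

/-- Evaluation map from the polynomial ring over `A^p` in variables `Γ` to `A`. -/
noncomputable def phiPB : MvPolynomial Γ (Bsub p : Subring A) →+* A :=
  eval₂Hom (Bsub p : Subring A).subtype (fun γ => (γ : A))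

@[simp] lemma phiPB_C (c : (Bsub p : Subring A)) : phiPB p Γ (C c) = (c : A) := by
  simp [phiPB]

@[simp] lemma phiPB_X (γ : Γ) : phiPB p Γ (X γ) = (γ : A) := by
  simp [phiPB]

lemma phiPB_surjective (hΓ : Subring.closure ((Set.range fun a : A => a ^ p) ∪ Γ) = ⊤) :
    Function.Surjective (phiPB p Γ) := by
  intro a
  have ha : a ∈ Subring.closure ((Set.range fun a : A => a ^ p) ∪ Γ) := by
    rw [hΓ]; trivial
  have h : Subring.closure ((Set.range fun a : A => a ^ p) ∪ Γ) ≤ (phiPB p Γ).range := by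
    apply Subring.closure_le.2
    rintro x (⟨b, rfl⟩ | hx)
    · exact ⟨C ⟨b ^ p, ⟨b, by rw [frobenius_def]⟩⟩, by simp⟩
    · exact ⟨X ⟨x, hx⟩, by simp⟩
  exact h ha

/-- Generators of the kernel of `phiPB`. -/
noncomputable def genPB (γ : Γ) : MvPolynomial Γ (Bsub p : Subring A) :=
  X γ ^ p - C ⟨(γ : A) ^ p, ⟨(γ : A), by rw [frobenius_def]⟩⟩

noncomputable def JPB : Ideal (MvPolynomial Γ (Bsub p : Subring A)) :=
  Ideal.span (Set.range (genPB p Γ))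

lemma JPB_le_ker : ∀ f ∈ JPB p Γ, phiPB p Γ f = 0 := by
  intro f hf
  have h : JPB p Γ ≤ RingHom.ker (phiPB p Γ) := by
    rw [JPB, Ideal.span_le]
    rintro x ⟨γ, rfl⟩
    simp [RingHom.mem_ker, genPB]
  exact h hf

lemma apply_le_sumPB {σ : Type*} (d : σ →₀ ℕ) (γ : σ) : d γ ≤ d.sum fun _ e => e := by
  classical
  by_cases h : γ ∈ d.support
  · exact Finset.single_le_sum (fun i _ => Nat.zero_le _) h
  · simp [Finsupp.notMem_support_iff.1 h]

/-- A polynomial is reduced if all exponents are `< p`. -/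
def ReducedPB (f : MvPolynomial Γ (Bsub p : Subring A)) : Prop :=
  ∀ d ∈ f.support, ∀ γ, d γ < p

lemma reduce_monomial (n : ℕ) : ∀ d : Γ →₀ ℕ, (d.sum fun _ e => e) ≤ n →
    ∀ c, ∃ g, ReducedPB p Γ g ∧ monomial d c - g ∈ JPB p Γ := by
  induction n with
  | zero =>
    intro d hd c
    refine ⟨monomial d c, ?_, by simp⟩
    intro d' hd' γ
    have : d' = d := by
      have := support_monomial_subset hd'
      simpa using this
    subst this
    have h2 : d' γ ≤ 0 := le_trans (apply_le_sumPB d' γ) hd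
    have := (Fact.out : p.Prime).pos
    omega
  | succ n ih =>
    intro d hd c
    by_cases h : ∀ γ, d γ < p
    · refine ⟨monomial d c, ?_, by simp⟩
      intro d' hd' γ
      have : d' = d := by simpa using support_monomial_subset hd'
      subst this; exact h γ
    · push_neg at h
      obtain ⟨γ, hγ⟩ := h
      set d' := d - Finsupp.single γ p with hd'
      have hle : Finsupp.single γ p ≤ d := by
        rw [Finsupp.single_le_iff]; exact hγ
      have hdd : d' + Finsupp.single γ p = d := tsub_add_cancel_of_le hle
      set b : (Bsub p : Subring A) := ⟨(γ : A) ^ p, ⟨(γ : A), by rw [frobenius_def]⟩⟩ with hb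
      have hsum : (d'.sum fun _ e => e) ≤ n := by
        have h1 : (d.sum fun _ e => e) = (d'.sum fun _ e => e) + p := by
          rw [← hdd, Finsupp.sum_add_index' (fun _ => rfl) (fun _ _ _ => rfl),
            Finsupp.sum_single_index rfl]
        have hp : 1 ≤ p := (Fact.out : p.Prime).one_lt.le.trans' (by omega)
        omega
      obtain ⟨g, hg, hgJ⟩ := ih d' hsum (c * b)
      refine ⟨g, hg, ?_⟩
      have key : monomial d c - monomial d' (c * b) ∈ JPB p Γ := by
        have e1 : (monomial d c : MvPolynomial Γ (Bsub p : Subring A))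
            = monomial d' c * X γ ^ p := by
          rw [X_pow_eq_monomial, monomial_mul, hdd, mul_one]
        have e2 : (monomial d' (c * b) : MvPolynomial Γ (Bsub p : Subring A))
            = monomial d' c * C b := by
          rw [C_apply, monomial_mul, add_zero]
        have h3 : monomial d c - monomial d' (c * b) = monomial d' c * genPB p Γ γ := by
          rw [e1, e2, genPB, hb]; ring
        rw [h3]
        exact Ideal.mul_mem_left _ _ (Ideal.subset_span ⟨γ, rfl⟩)
      have := Ideal.add_mem _ key hgJ
      simpa using this

lemma reduce_any (f : MvPolynomial Γ (Bsub p : Subring A)) :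
    ∃ g, ReducedPB p Γ g ∧ f - g ∈ JPB p Γ := by
  classical
  induction f using MvPolynomial.induction_on' with
  | monomial d c => exact reduce_monomial p Γ _ d le_rfl c
  | add f1 f2 ih1 ih2 =>
    obtain ⟨g1, hg1, h1⟩ := ih1
    obtain ⟨g2, hg2, h2⟩ := ih2
    refine ⟨g1 + g2, ?_, ?_⟩
    · intro d hd γ
      rcases Finset.mem_union.1 (MvPolynomial.support_add hd) with h | h
      · exact hg1 d h γ
      · exact hg2 d h γ
    · have := Ideal.add_mem _ h1 h2
      convert this using 1; ring

lemma reduced_eq_zero (hΓ : IsPBasis p Γ) (f : MvPolynomial Γ (Bsub p : Subring A))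
    (hred : ReducedPB p Γ f) (hf : phiPB p Γ f = 0) : f = 0 := by
  classical
  set t : Finset Γ := f.support.sup Finsupp.support with ht
  set k := t.card with hk
  set E : Fin k ≃ {x // x ∈ t} := t.equivFin.symm with hE
  set av : Fin k → A := fun i => (((E i : Γ) : A)) with hav
  have hav_inj : Function.Injective av := by
    intro i j hij
    exact E.injective (Subtype.ext (Subtype.ext hij))
  have hav_mem : ∀ i, av i ∈ Γ := fun i => ((E i : Γ)).2
  set τ : (Fin k → Fin p) → (Γ →₀ ℕ) :=
    fun m => ∑ i, Finsupp.single ((E i : Γ)) ((m i : ℕ)) with hτ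
  have hτ_apply : ∀ m i, τ m ((E i : Γ)) = (m i : ℕ) := by
    intro m i
    rw [hτ]
    simp only [Finsupp.coe_finset_sum, Finset.sum_apply]
    rw [Finset.sum_eq_single i]
    · simp [Finsupp.single_apply]
    · intro j _ hji
      rw [Finsupp.single_apply, if_neg]
      intro h
      exact hji (E.injective (Subtype.ext h))
    · simp
  have hτ_not : ∀ m γ, γ ∉ t → τ m γ = 0 := by
    intro m γ hγ
    rw [hτ]
    simp only [Finsupp.coe_finset_sum, Finset.sum_apply]
    apply Finset.sum_eq_zero
    intro j _
    rw [Finsupp.single_apply, if_neg]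
    intro h
    exact hγ (h ▸ (E j).2)
  have hτ_supp : ∀ m, (τ m).support ⊆ t := by
    intro m γ hγ
    by_contra h
    exact (Finsupp.mem_support_iff.1 hγ) (hτ_not m γ h)
  have hτ_inj : Function.Injective τ := by
    intro m m' h
    funext i
    have := congrArg (fun d => d ((E i : Γ))) h
    simp only [hτ_apply] at this
    exact Fin.ext this
  have hsupp_τ : ∀ d ∈ f.support, ∃ m, τ m = d := by
    intro d hd
    refine ⟨fun i => ⟨d ((E i : Γ)), hred d hd _⟩, ?_⟩
    ext γ
    by_cases hγ : γ ∈ t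
    · have hEi : ((E (E.symm ⟨γ, hγ⟩) : Γ)) = γ := by
        rw [Equiv.apply_symm_apply]
      rw [← hEi, hτ_apply]
    · rw [hτ_not _ _ hγ]
      have hds : d.support ⊆ t := Finset.le_sup (f := Finsupp.support) hd
      by_contra h
      exact hγ (hds (Finsupp.mem_support_iff.2 fun hz => h hz.symm))
  set c : (Fin k → Fin p) → A := fun m => ((f.coeff (τ m) : (Bsub p : Subring A)) : A) with hc
  have hcmem : ∀ m, c m ∈ Subring.closure (Set.range fun x : A => x ^ p) := by
    intro m
    rw [closure_eq_Bsub]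
    exact SetLike.coe_mem _
  set term : (Γ →₀ ℕ) → A :=
    fun d => ((f.coeff d : (Bsub p : Subring A)) : A) * ∏ γ ∈ d.support, (γ : A) ^ d γ
    with hterm
  have step1 : phiPB p Γ f = ∑ d ∈ f.support, term d := by
    have h0 : phiPB p Γ f = eval₂ (Bsub p : Subring A).subtype (fun γ : Γ => (γ : A)) f := rfl
    rw [h0, eval₂_eq]
    rfl
  have step2 : ∀ m, c m * ∏ i, av i ^ ((m i : ℕ)) = term (τ m) := by
    intro m
    rw [hterm]
    congr 1
    have e1 : ∏ γ ∈ (τ m).support, (γ : A) ^ (τ m) γ = ∏ γ ∈ t, (γ : A) ^ (τ m) γ := by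
      apply Finset.prod_subset (hτ_supp m)
      intro γ _ hγ
      rw [Finsupp.notMem_support_iff.1 hγ, pow_zero]
    have e3 : ∏ i, ((E i : Γ) : A) ^ (τ m) ((E i : Γ)) = ∏ γ ∈ t, (γ : A) ^ (τ m) γ :=
      (Equiv.prod_comp E (fun x : {x // x ∈ t} => ((x : Γ) : A) ^ (τ m) ((x : Γ)))).trans
        (Finset.prod_coe_sort t (fun γ : Γ => (γ : A) ^ (τ m) γ))
    rw [e1, ← e3]
    apply Finset.prod_congr rfl
    intro i _
    rw [hτ_apply]
  have step3 : (∑ m : Fin k → Fin p, c m * ∏ i, av i ^ ((m i : ℕ))) = 0 := by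
    calc (∑ m : Fin k → Fin p, c m * ∏ i, av i ^ ((m i : ℕ)))
        = ∑ m : Fin k → Fin p, term (τ m) := Finset.sum_congr rfl fun m _ => step2 m
      _ = ∑ d ∈ Finset.image τ Finset.univ, term d :=
          (Finset.sum_image fun m _ m' _ h => hτ_inj h).symm
      _ = ∑ d ∈ f.support, term d := by
          apply (Finset.sum_subset ?_ ?_).symm
          · intro d hd
            obtain ⟨m, rfl⟩ := hsupp_τ d hd
            exact Finset.mem_image_of_mem τ (Finset.mem_univ m)
          · intro d _ hd
            rw [hterm]
            simp only [MvPolynomial.notMem_support_iff.1 hd]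
            simp
      _ = 0 := by rw [← step1, hf]
  have hc0 := hΓ.2 k av hav_inj hav_mem c hcmem step3
  apply MvPolynomial.ext
  intro d
  rw [coeff_zero]
  by_cases hd : d ∈ f.support
  · obtain ⟨m, rfl⟩ := hsupp_τ d hd
    have h2 : ((f.coeff (τ m) : (Bsub p : Subring A)) : A) = 0 := hc0 m
    exact_mod_cast h2
  · exact MvPolynomial.notMem_support_iff.1 hd

lemma ker_le_JPB (hΓ : IsPBasis p Γ) (f : MvPolynomial Γ (Bsub p : Subring A))
    (hf : phiPB p Γ f = 0) : f ∈ JPB p Γ := by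
  obtain ⟨g, hg, hgJ⟩ := reduce_any p Γ f
  have hgk : phiPB p Γ g = 0 := by
    have h1 := JPB_le_ker p Γ _ hgJ
    rw [map_sub, hf, zero_sub, neg_eq_zero] at h1
    exact h1
  have hzero := reduced_eq_zero p Γ hΓ g hg hgk
  rw [hzero, sub_zero] at hgJ
  exact hgJ

lemma phi_pderiv_ker (hΓ : IsPBasis p Γ) (f : MvPolynomial Γ (Bsub p : Subring A))
    (hf : phiPB p Γ f = 0) (γ : Γ) : phiPB p Γ (pderiv γ f) = 0 := by
  have hJ : f ∈ Ideal.span (Set.range (genPB p Γ)) := ker_le_JPB p Γ hΓ f hf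
  have key : ∀ x ∈ Ideal.span (Set.range (genPB p Γ)),
      phiPB p Γ x = 0 ∧ phiPB p Γ (pderiv γ x) = 0 := by
    intro x hx
    refine Submodule.span_induction ?_ ?_ ?_ ?_ hx
    · rintro y ⟨γ', rfl⟩
      constructor
      · simp [genPB]
      · rw [genPB, map_sub, pderiv_C, sub_zero, pderiv_pow]
        have hp : ((p : ℕ) : MvPolynomial Γ (Bsub p : Subring A)) = 0 :=
          CharP.cast_eq_zero _ p
        rw [hp, zero_mul, zero_mul, map_zero]
    · simp
    · intro x y _ _ hx hy
      constructor
      · rw [map_add, hx.1, hy.1, add_zero]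
      · rw [map_add, map_add, hx.2, hy.2, add_zero]
    · intro r x _ hx
      constructor
      · rw [smul_eq_mul, map_mul, hx.1, mul_zero]
      · rw [smul_eq_mul, pderiv_mul, map_add, map_mul, map_mul, hx.1, hx.2,
          mul_zero, mul_zero, add_zero]
  exact (key f hJ).2

/-- Values of the partial-derivative derivation on `A`. -/
noncomputable def DfunPB (hΓ : IsPBasis p Γ) (γ : Γ) (a : A) : A :=
  phiPB p Γ (pderiv γ (Function.surjInv (phiPB_surjective p Γ hΓ.1) a))

lemma DfunPB_eq (hΓ : IsPBasis p Γ) (γ : Γ) (g : MvPolynomial Γ (Bsub p : Subring A)) (a : A)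
    (hg : phiPB p Γ g = a) : phiPB p Γ (pderiv γ g) = DfunPB p Γ hΓ γ a := by
  set σa := Function.surjInv (phiPB_surjective p Γ hΓ.1) a with hσ
  have hσa : phiPB p Γ σa = a := Function.surjInv_eq _ a
  have hker : phiPB p Γ (g - σa) = 0 := by
    rw [map_sub, hg, hσa, sub_self]
  have := phi_pderiv_ker p Γ hΓ _ hker γ
  rw [map_sub, map_sub] at this
  have h2 : phiPB p Γ (pderiv γ g) = phiPB p Γ (pderiv γ σa) := by
    have := sub_eq_zero.1 this
    exact this
  rw [h2]
  rfl

/-- The partial derivative with respect to `γ`, as a derivation on `A`. -/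
noncomputable def DPB (hΓ : IsPBasis p Γ) (γ : Γ) : Derivation ℤ A A where
  toFun := DfunPB p Γ hΓ γ
  map_add' a b := by
    set σ := Function.surjInv (phiPB_surjective p Γ hΓ.1)
    have hσ : ∀ x, phiPB p Γ (σ x) = x := fun x => Function.surjInv_eq _ x
    have h1 : phiPB p Γ (σ a + σ b) = a + b := by rw [map_add, hσ, hσ]
    rw [← DfunPB_eq p Γ hΓ γ _ _ h1, map_add, map_add,
      DfunPB_eq p Γ hΓ γ _ _ (hσ a), DfunPB_eq p Γ hΓ γ _ _ (hσ b)]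
  map_smul' z a := by
    set σ := Function.surjInv (phiPB_surjective p Γ hΓ.1)
    have hσ : ∀ x, phiPB p Γ (σ x) = x := fun x => Function.surjInv_eq _ x
    have h1 : phiPB p Γ (z • σ a) = z • a := by rw [map_zsmul, hσ]
    rw [eq_comm]
    simp only [RingHom.id_apply]
    rw [← DfunPB_eq p Γ hΓ γ _ _ h1, map_zsmul, map_zsmul,
      DfunPB_eq p Γ hΓ γ _ _ (hσ a)]
  map_one_eq_zero' := by
    have h1 : phiPB p Γ (1 : MvPolynomial Γ (Bsub p : Subring A)) = 1 := map_one _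
    have := DfunPB_eq p Γ hΓ γ 1 1 h1
    simp only [LinearMap.coe_mk, AddHom.coe_mk]
    rw [← this, pderiv_one, map_zero]
  leibniz' a b := by
    set σ := Function.surjInv (phiPB_surjective p Γ hΓ.1)
    have hσ : ∀ x, phiPB p Γ (σ x) = x := fun x => Function.surjInv_eq _ x
    have h1 : phiPB p Γ (σ a * σ b) = a * b := by rw [map_mul, hσ, hσ]
    simp only [LinearMap.coe_mk, AddHom.coe_mk, smul_eq_mul]
    rw [← DfunPB_eq p Γ hΓ γ _ _ h1, pderiv_mul, map_add, map_mul, map_mul,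
      DfunPB_eq p Γ hΓ γ _ _ (hσ a), DfunPB_eq p Γ hΓ γ _ _ (hσ b), hσ, hσ]
    ring

lemma DPB_apply (hΓ : IsPBasis p Γ) (γ : Γ) (g : MvPolynomial Γ (Bsub p : Subring A)) (a : A)
    (hg : phiPB p Γ g = a) : DPB p Γ hΓ γ a = phiPB p Γ (pderiv γ g) :=
  (DfunPB_eq p Γ hΓ γ g a hg).symm

lemma cancel_natCast {R : Type*} [CommRing R] [CharP R p]
    {r : ℕ} (h0 : 0 < r) (hlt : r < p) {c : R} (h : c * (r : R) = 0) : c = 0 := by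
  have hp : p.Prime := Fact.out
  have hcop : Nat.Coprime p r := (Nat.Prime.coprime_iff_not_dvd hp).2
    (Nat.not_dvd_of_pos_of_lt h0 hlt)
  obtain ⟨s, -, hs⟩ := Nat.exists_mul_mod_eq_one_of_coprime hcop.symm hp.one_lt
  have hmod : (r * s : ℕ) ≡ 1 [MOD p] := by
    unfold Nat.ModEq
    rw [hs, Nat.mod_eq_of_lt hp.one_lt]
  have hcast : ((r * s : ℕ) : R) = 1 := by
    rw [CharP.natCast_eq_natCast' R p hmod, Nat.cast_one]
  calc c = c * ((r * s : ℕ) : R) := by rw [hcast, mul_one]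
    _ = (c * (r : R)) * (s : R) := by push_cast; ring
    _ = 0 := by rw [h, zero_mul]

lemma reduced_pderiv (g : MvPolynomial Γ (Bsub p : Subring A)) (hred : ReducedPB p Γ g)
    (γ : Γ) : ReducedPB p Γ (pderiv γ g) := by
  classical
  intro d hd γ'
  have hrepr : pderiv γ g
      = ∑ e ∈ g.support, monomial (e - Finsupp.single γ 1) (g.coeff e * (e γ : ℕ)) := by
    conv_lhs => rw [g.as_sum]
    rw [map_sum]
    apply Finset.sum_congr rfl
    intro e _
    rw [pderiv_monomial]
  rw [hrepr] at hd
  have := MvPolynomial.support_sum hd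
  obtain ⟨e, he, hde⟩ := Finset.mem_biUnion.1 this
  have hd_eq : d = e - Finsupp.single γ 1 := by
    simpa using support_monomial_subset hde
  have h1 : ((e - Finsupp.single γ 1 : Γ →₀ ℕ)) γ' ≤ e γ' := by
    rw [Finsupp.tsub_apply]
    exact Nat.sub_le _ _
  rw [hd_eq]
  exact lt_of_le_of_lt h1 (hred e he γ')

lemma const_of_pderiv_zero (g : MvPolynomial Γ (Bsub p : Subring A))
    (hred : ReducedPB p Γ g) (hz : ∀ γ : Γ, pderiv γ g = 0) :
    ∀ d ∈ g.support, d = 0 := by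
  classical
  intro d hd
  by_contra hne
  obtain ⟨γ, hγ⟩ : ∃ γ, d γ ≠ 0 := by
    by_contra hall
    push_neg at hall
    exact hne (Finsupp.ext hall)
  have hrepr : pderiv γ g
      = ∑ e ∈ g.support, monomial (e - Finsupp.single γ 1) (g.coeff e * (e γ : ℕ)) := by
    conv_lhs => rw [g.as_sum]
    rw [map_sum]
    apply Finset.sum_congr rfl
    intro e _
    rw [pderiv_monomial]
  have hcoeff : coeff (d - Finsupp.single γ 1) (pderiv γ g) = g.coeff d * (d γ : ℕ) := by
    rw [hrepr, MvPolynomial.coeff_sum]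
    rw [Finset.sum_eq_single d]
    · rw [coeff_monomial, if_pos rfl]
    · intro e he hed
      rw [coeff_monomial]
      split_ifs with hcond
      · by_cases heγ : e γ = 0
        · rw [heγ]; simp
        · exfalso
          apply hed
          have h1 : e - Finsupp.single γ 1 + Finsupp.single γ 1 = e :=
            tsub_add_cancel_of_le (by rw [Finsupp.single_le_iff]; omega)
          have h2 : d - Finsupp.single γ 1 + Finsupp.single γ 1 = d :=
            tsub_add_cancel_of_le (by rw [Finsupp.single_le_iff]; omega)
          rw [← h1, ← h2, hcond]
      · rfl
    · intro hds
      exact absurd hd hds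
  rw [hz γ] at hcoeff
  simp only [coeff_zero] at hcoeff
  have hdγ : 0 < d γ := Nat.pos_of_ne_zero hγ
  have hlt : d γ < p := hred d hd γ
  have : g.coeff d = 0 := cancel_natCast p hdγ hlt hcoeff.symm
  exact MvPolynomial.mem_support_iff.1 hd this

end PBAux

/-- If `A` is a commutative ring of characteristic `p > 0` having a `p`-basis, then for `a ∈ A`
the Kähler differential `da = 0` in `Ω¹_{A/ℤ}` if and only if `a` is a `p`-th power in `A`. -/
theorem d_eq_zero_iff_pth_power (p : ℕ) [Fact p.Prime] {A : Type*} [CommRing A] [CharP A p]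
    (Γ : Set A) (hΓ : IsPBasis p Γ) (a : A) :
    KaehlerDifferential.D ℤ A a = 0 ↔ ∃ b : A, b ^ p = a := by
  classical
  constructor
  · intro h
    have hσa : phiPB p Γ (Function.surjInv (phiPB_surjective p Γ hΓ.1) a) = a :=
      Function.surjInv_eq _ a
    obtain ⟨g, hgred, hgJ⟩ := reduce_any p Γ (Function.surjInv (phiPB_surjective p Γ hΓ.1) a)
    have hφg : phiPB p Γ g = a := by
      have h1 := JPB_le_ker p Γ _ hgJ
      rw [map_sub, hσa] at h1
      exact (sub_eq_zero.1 h1).symm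
    have hDz : ∀ γ : Γ, phiPB p Γ (pderiv γ g) = 0 := by
      intro γ
      have h1 : DPB p Γ hΓ γ a = 0 := by
        rw [← Derivation.liftKaehlerDifferential_comp_D (DPB p Γ hΓ γ) a, h, map_zero]
      rw [DPB_apply p Γ hΓ γ g a hφg] at h1
      exact h1
    have hpz : ∀ γ : Γ, pderiv γ g = 0 := fun γ =>
      reduced_eq_zero p Γ hΓ _ (reduced_pderiv p Γ g hgred γ) (hDz γ)
    have hconst := const_of_pderiv_zero p Γ g hgred hpz
    have hgC : g = C (g.coeff 0) := by
      apply MvPolynomial.ext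
      intro d
      rw [coeff_C]
      split_ifs with hd0
      · rw [← hd0]
      · have hd' : d ∉ g.support := by
          intro hds
          exact hd0 (hconst d hds).symm
        exact MvPolynomial.notMem_support_iff.1 hd'
    have hm := (g.coeff 0).2
    simp only [Bsub, RingHom.mem_range] at hm
    obtain ⟨b, hb⟩ := hm
    refine ⟨b, ?_⟩
    have ha : a = ((g.coeff 0 : (Bsub p : Subring A)) : A) := by
      conv_lhs => rw [← hφg, hgC]
      exact phiPB_C p Γ _
    rw [ha, ← frobenius_def]; exact hb
  · rintro ⟨b, rfl⟩
    rw [Derivation.leibniz_pow]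
    rw [← Nat.cast_smul_eq_nsmul A p, CharP.cast_eq_zero A p, zero_smul]
end

section
/- Let A be a commutative ring of characteristic p > 0 with a p-basis. Define D_n : W_n(A) → Ω¹_A on truncated Witt vectors of length n by D_n(f₀,…,f_{n-1}) = d f_{n-1} + f_{n-2}^{p-1} d f_{n-2} + ⋯ + f₀^{p^{n-1}-1} d f₀. Then D_n is additive. -/
open MvPolynomial WittVector Finset in
private lemma key_smul' (p : ℕ) {S : Type*} [CommRing S] (m i : ℕ) (hi : i ≤ m) (g : S) :
    ((p:S) ^ i) • KaehlerDifferential.D ℤ S (g ^ p ^ (m - i))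
      = ((p:S) ^ m) • (g ^ (p ^ (m - i) - 1) • KaehlerDifferential.D ℤ S g) := by
  rw [Derivation.leibniz_pow, ← Nat.cast_smul_eq_nsmul S, smul_smul, smul_smul, smul_smul]
  congr 2
  push_cast
  rw [← pow_add, Nat.add_sub_cancel' hi]

open MvPolynomial WittVector Finset in
private lemma D_sum_eq' (p m : ℕ) {S : Type*} [CommRing S] (g : ℕ → S) :
    KaehlerDifferential.D ℤ S (∑ i ∈ Finset.range (m+1), (p:S)^i * g i ^ p ^ (m - i))
    = ((p:S)^m) • ∑ i : Fin (m+1),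
        (g i)^(p^(m - (i:ℕ)) - 1) • KaehlerDifferential.D ℤ S (g i) := by
  rw [map_sum, Finset.smul_sum, Fin.sum_univ_eq_sum_range
    (fun i => ((p:S)^m) • ((g i)^(p^(m - i) - 1) • KaehlerDifferential.D ℤ S (g i)))]
  refine Finset.sum_congr rfl fun i hi => ?_
  rw [Finset.mem_range, Nat.lt_succ_iff] at hi
  have hD : KaehlerDifferential.D ℤ S ((p:S)^i) = 0 := by
    rw [show ((p:S)^i) = ((p^i : ℕ) : S) by push_cast; ring]
    simp
  rw [Derivation.leibniz, hD, smul_zero, add_zero, key_smul' p m i hi]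

open MvPolynomial WittVector Finset in
set_option synthInstance.maxHeartbeats 1000000 in
set_option maxHeartbeats 1000000 in
/-- The universal additivity identity for `D_n` over `ℤ[X_{b,i}]`. -/
private lemma wittD_add_univ (p : ℕ) [Fact p.Prime] (m : ℕ) :
    (∑ i : Fin (m+1), (wittAdd p (i:ℕ)) ^ (p ^ (m - (i:ℕ)) - 1) •
        KaehlerDifferential.D ℤ (MvPolynomial (Fin 2 × ℕ) ℤ) (wittAdd p (i:ℕ)))
    = (∑ i : Fin (m+1), (X ((0:Fin 2), (i:ℕ)) : MvPolynomial (Fin 2 × ℕ) ℤ) ^ (p ^ (m - (i:ℕ)) - 1) •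
        KaehlerDifferential.D ℤ (MvPolynomial (Fin 2 × ℕ) ℤ) (X ((0:Fin 2), (i:ℕ))))
    + ∑ i : Fin (m+1), (X ((1:Fin 2), (i:ℕ)) : MvPolynomial (Fin 2 × ℕ) ℤ) ^ (p ^ (m - (i:ℕ)) - 1) •
        KaehlerDifferential.D ℤ (MvPolynomial (Fin 2 × ℕ) ℤ) (X ((1:Fin 2), (i:ℕ))) := by
  set R' := MvPolynomial (Fin 2 × ℕ) ℤ
  haveI : Module.IsTorsionFree R' (Ω[R'⁄ℤ]) :=
    (KaehlerDifferential.mvPolynomialBasis ℤ (Fin 2 × ℕ)).isTorsionFree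
  have hpoly : (∑ i ∈ range (m+1), (p:R')^i * (wittAdd p i)^(p^(m-i)))
      = (∑ i ∈ range (m+1), (p:R')^i * (X ((0:Fin 2),i) : R')^(p^(m-i)))
      + ∑ i ∈ range (m+1), (p:R')^i * (X ((1:Fin 2),i) : R')^(p^(m-i)) := by
    have h1 : bind₁ (wittAdd p) (wittPolynomial p ℤ m) =
        ∑ i ∈ range (m+1), (p:R')^i * (wittAdd p i)^(p^(m-i)) := by
      rw [bind₁, aeval_wittPolynomial]
    have e : ∀ b : Fin 2, rename (Prod.mk b) (wittPolynomial p ℤ m) =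
        ∑ i ∈ range (m+1), (p:R')^i * (X (b,i) : R')^(p^(m-i)) := by
      intro b; rw [rename_eq_aeval, aeval_wittPolynomial]; rfl
    rw [← h1, ← e 0, ← e 1, wittAdd, wittStructureInt_prop, map_add, bind₁_X_right, bind₁_X_right]
  have h := congrArg (KaehlerDifferential.D ℤ R') hpoly
  rw [map_add] at h
  have h := (D_sum_eq' p m (fun i => wittAdd p i)).symm.trans (h.trans (congrArg₂ (· + ·)
    (D_sum_eq' p m (fun i => (X ((0:Fin 2),i) : R')))
    (D_sum_eq' p m (fun i => (X ((1:Fin 2),i) : R')))))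
  refine smul_right_injective (R := R') (Ω[R'⁄ℤ]) (r := (p:R')^m)
    (pow_ne_zero m (Nat.cast_ne_zero.mpr (Fact.out : p.Prime).ne_zero)) ?_
  show ((p:R')^m) • _ = ((p:R')^m) • _
  rw [smul_add]
  exact h

/-- `D_n : W_n(A) → Ω¹_A`, `D_n(f₀,…,f_{n-1}) = d f_{n-1} + f_{n-2}^{p-1} d f_{n-2} + ⋯
+ f₀^{p^{n-1}-1} d f₀`, on truncated Witt vectors of length `n`. -/
noncomputable def wittD (p n : ℕ) [Fact p.Prime] {A : Type*} [CommRing A]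
    (x : TruncatedWittVector p n A) : Ω[A⁄ℤ] :=
  ∑ i : Fin n,
    (x.coeff i) ^ (p ^ (n - 1 - (i : ℕ)) - 1) • KaehlerDifferential.D ℤ A (x.coeff i)

open MvPolynomial WittVector in
set_option synthInstance.maxHeartbeats 1000000 in
set_option maxHeartbeats 1000000 in
/-- If `A` is a commutative ring of characteristic `p > 0` with a `p`-basis, then
`D_n : W_n(A) → Ω¹_A` is additive. -/
theorem wittD_add (p n : ℕ) [Fact p.Prime] {A : Type*} [CommRing A] [CharP A p]
    (Γ : Set A) (hΓ : IsPBasis p Γ) (x y : TruncatedWittVector p n A) :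
    wittD p n (x + y) = wittD p n x + wittD p n y := by
  cases n with
  | zero => simp [wittD]
  | succ m =>
    set R' := MvPolynomial (Fin 2 × ℕ) ℤ with hR'
    set f : Fin 2 × ℕ → A := Function.uncurry ![x.out.coeff, y.out.coeff] with hf
    letI : Algebra R' A := (MvPolynomial.aeval f).toRingHom.toAlgebra
    haveI : IsScalarTower ℤ R' A := IsScalarTower.of_algebraMap_eq' (Subsingleton.elim _ _)
    set φ := KaehlerDifferential.map ℤ ℤ R' A with hφdef
    have hterm : ∀ (g : R') (e : ℕ),
        φ (g ^ e • KaehlerDifferential.D ℤ R' g)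
        = (aeval f g) ^ e • KaehlerDifferential.D ℤ A (aeval f g) := by
      intro g e
      rw [hφdef, LinearMap.map_smul, KaehlerDifferential.map_D,
        ← algebraMap_smul A (g ^ e), map_pow]
      rfl
    have hφ := congrArg φ (wittD_add_univ p m)
    rw [map_add, map_sum, map_sum, map_sum] at hφ
    simp +zetaDelta only [hterm] at hφ
    have hadd : ∀ i : Fin (m+1), aeval f (wittAdd p (i:ℕ)) = (x + y).coeff i := by
      intro i
      have h1 : x + y = WittVector.truncateFun (m+1) (x.out + y.out) := rfl
      rw [h1, WittVector.coeff_truncateFun, WittVector.add_coeff]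
      rfl
    have hX : ∀ (b : Fin 2) (i : Fin (m+1)),
        aeval f (X (b, (i:ℕ)) : R') = (![x, y] b).coeff i := by
      intro b i
      rw [aeval_X]
      fin_cases b <;>
        simp [hf, Function.uncurry, TruncatedWittVector.coeff_out]
    simp +zetaDelta only [hadd, hX] at hφ
    simpa [wittD] using hφ
end

section
/- Let A be a commutative ring of characteristic p > 0 with a p-basis. The map D_n : W_n(A) → Ω¹_A given by D_n(f₀,…,f_{n-1}) = d f_{n-1} + f_{n-2}^{p-1} d f_{n-2} + ⋯ + f₀^{p^{n-1}-1} d f₀ satisfies the twisted Leibniz rule D_n(f·g) = g₀^{p^{n-1}} D_n(f) + f₀^{p^{n-1}} D_n(g) for Witt vectors f = (f₀,…,f_{n-1}), g = (g₀,…,g_{n-1}). -/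
/-- The `(m)`-th ghost component as an explicit sum. -/
lemma ghost_sum (p : ℕ) [Fact p.Prime] {R : Type*} [CommRing R] (m : ℕ) (x : WittVector p R) :
    WittVector.ghostComponent m x
      = ∑ i ∈ Finset.range (m + 1), (p : R) ^ i * x.coeff i ^ p ^ (m - i) := by
  rw [WittVector.ghostComponent_apply, wittPolynomial_eq_sum_C_mul_X_pow]
  simp

/-- `d(w_{n-1}(x)) = p^{n-1} • D_n(x)` over any commutative ring. -/
lemma D_ghost (p n : ℕ) [Fact p.Prime] (hn : 0 < n) {R : Type*} [CommRing R] (x : WittVector p R) :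
    KaehlerDifferential.D ℤ R (WittVector.ghostComponent (n - 1) x)
      = (p : R) ^ (n - 1) • wittD p n (WittVector.truncateFun n x) := by
  rw [ghost_sum, Nat.sub_add_cancel hn]
  unfold wittD
  simp only [WittVector.coeff_truncateFun]
  rw [map_sum, Finset.smul_sum, Fin.sum_univ_eq_sum_range
    (fun i => (p : R) ^ (n - 1) • (x.coeff i) ^ (p ^ (n - 1 - i) - 1) •
      KaehlerDifferential.D ℤ R (x.coeff i))]
  refine Finset.sum_congr rfl fun i hi => ?_
  have hi' : i ≤ n - 1 := Nat.le_sub_one_of_lt (Finset.mem_range.mp hi)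
  have hc : KaehlerDifferential.D ℤ R ((p : R) ^ i) = 0 := by
    have : ((p : R)) ^ i = algebraMap ℤ R ((p : ℤ) ^ i) := by push_cast; ring
    rw [this, Derivation.map_algebraMap]
  rw [Derivation.leibniz, hc, smul_zero, add_zero, Derivation.leibniz_pow,
    ← Nat.cast_smul_eq_nsmul R (p ^ (n - 1 - i)), smul_smul]
  congr 1
  push_cast
  rw [← pow_add, Nat.add_sub_cancel' hi']

/-- `w_{n-1}(z) ≡ z₀^{p^{n-1}} mod p`. -/
lemma ghost_decomp (p n : ℕ) [Fact p.Prime] {R : Type*} [CommRing R]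
    (z : WittVector p R) :
    ∃ t : R, WittVector.ghostComponent (n - 1) z
      = z.coeff 0 ^ p ^ (n - 1) + (p : R) * t := by
  refine ⟨∑ i ∈ Finset.range (n - 1), (p : R) ^ i * z.coeff (i + 1) ^ p ^ (n - 1 - (i + 1)), ?_⟩
  rw [ghost_sum, Finset.sum_range_succ', add_comm]
  congr 1
  · simp
  · rw [Finset.mul_sum]
    refine Finset.sum_congr rfl fun i _ => ?_
    rw [pow_succ']
    ring

/-- Naturality of `D_n` in the base ring. -/
lemma wittD_map (p n : ℕ) [Fact p.Prime] {R A : Type*} [CommRing R] [CommRing A]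
    [Algebra R A] (x : WittVector p R) :
    KaehlerDifferential.map ℤ ℤ R A (wittD p n (WittVector.truncateFun n x))
      = wittD p n (WittVector.truncateFun n (WittVector.map (algebraMap R A) x)) := by
  unfold wittD
  rw [map_sum]
  refine Finset.sum_congr rfl fun i _ => ?_
  simp only [WittVector.coeff_truncateFun, WittVector.map_coeff]
  rw [map_smul, KaehlerDifferential.map_D, ← map_pow, algebraMap_smul]

attribute [local instance 2000] Ring.toIntAlgebra

/-- The universal twisted Leibniz rule, up to a multiple of `p`, over the universal
polynomial ring `ℤ[X_{j,i}]`. -/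
lemma witt_key (p n : ℕ) [Fact p.Prime] (hn : 0 < n) :
    ∃ ω : Ω[MvPolynomial (Fin 2 × ℕ) ℤ⁄ℤ],
      wittD p n (WittVector.truncateFun n
        (WittVector.mk p (fun i => MvPolynomial.X (0, i)) *
         WittVector.mk p (fun i => MvPolynomial.X (1, i))))
      = (MvPolynomial.X (1, 0) : MvPolynomial (Fin 2 × ℕ) ℤ) ^ p ^ (n - 1) •
          wittD p n (WittVector.truncateFun n (WittVector.mk p fun i => MvPolynomial.X (0, i)))
        + (MvPolynomial.X (0, 0) : MvPolynomial (Fin 2 × ℕ) ℤ) ^ p ^ (n - 1) •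
          wittD p n (WittVector.truncateFun n (WittVector.mk p fun i => MvPolynomial.X (1, i)))
        + (p : MvPolynomial (Fin 2 × ℕ) ℤ) • ω := by
  set R₀ := MvPolynomial (Fin 2 × ℕ) ℤ
  set X : WittVector p R₀ := WittVector.mk p fun i => MvPolynomial.X (0, i)
  set Y : WittVector p R₀ := WittVector.mk p fun i => MvPolynomial.X (1, i)
  obtain ⟨tX, htX⟩ := ghost_decomp p n X
  obtain ⟨tY, htY⟩ := ghost_decomp p n Y
  refine ⟨tY • wittD p n (WittVector.truncateFun n X)
    + tX • wittD p n (WittVector.truncateFun n Y), ?_⟩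
  have hinj : Function.Injective
      (fun ω : Ω[R₀⁄ℤ] => ((p : R₀) ^ (n - 1)) • ω) := by
    haveI : Module.IsTorsionFree R₀ Ω[R₀⁄ℤ] := by
      have := (KaehlerDifferential.mvPolynomialBasis ℤ (Fin 2 × ℕ)).isTorsionFree
      exact this
    exact smul_right_injective _
      (pow_ne_zero _ (Nat.cast_ne_zero.mpr (Fact.out (p := p.Prime)).ne_zero))
  apply hinj
  simp only
  rw [← D_ghost p n hn (X * Y), map_mul, Derivation.leibniz,
    D_ghost p n hn X, D_ghost p n hn Y, htX, htY]
  have h0X : X.coeff 0 = MvPolynomial.X (0, 0) := rfl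
  have h0Y : Y.coeff 0 = MvPolynomial.X (1, 0) := rfl
  rw [h0X, h0Y]
  module

/-- If `A` is a commutative ring of characteristic `p > 0` with a `p`-basis, then `D_n`
satisfies the twisted Leibniz rule
`D_n(f·g) = g₀^{p^{n-1}} D_n(f) + f₀^{p^{n-1}} D_n(g)` for Witt vectors `f, g`. -/
theorem wittD_mul (p n : ℕ) [Fact p.Prime] (hn : 0 < n) {A : Type*} [CommRing A] [CharP A p]
    (Γ : Set A) (hΓ : IsPBasis p Γ) (f g : TruncatedWittVector p n A) :
    wittD p n (f * g) =
      (g.coeff ⟨0, hn⟩) ^ (p ^ (n - 1)) • wittD p n f +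
      (f.coeff ⟨0, hn⟩) ^ (p ^ (n - 1)) • wittD p n g := by
  classical
  set R₀ := MvPolynomial (Fin 2 × ℕ) ℤ with hR₀
  let c : Fin 2 × ℕ → A := fun q => if q.1 = 0 then f.out.coeff q.2 else g.out.coeff q.2
  letI : Algebra R₀ A := ((MvPolynomial.aeval c : R₀ →ₐ[ℤ] A) : R₀ →+* A).toAlgebra
  have halg : ∀ q, algebraMap R₀ A (MvPolynomial.X q) = c q := fun q => by
    rw [RingHom.algebraMap_toAlgebra]
    exact MvPolynomial.aeval_X c q
  set X : WittVector p R₀ := WittVector.mk p fun i => MvPolynomial.X (0, i) with hX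
  set Y : WittVector p R₀ := WittVector.mk p fun i => MvPolynomial.X (1, i) with hY
  have hfX : WittVector.map (algebraMap R₀ A) X = f.out := by
    ext i
    rw [WittVector.map_coeff]
    show algebraMap R₀ A (MvPolynomial.X (0, i)) = _
    rw [halg]
    simp [c]
  have hgY : WittVector.map (algebraMap R₀ A) Y = g.out := by
    ext i
    rw [WittVector.map_coeff]
    show algebraMap R₀ A (MvPolynomial.X (1, i)) = _
    rw [halg]
    simp [c]
  obtain ⟨ω, hkey⟩ := witt_key p n hn
  have happ := congrArg (KaehlerDifferential.map ℤ ℤ R₀ A) hkey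
  rw [map_add, map_add, map_smul, map_smul, map_smul,
    wittD_map, wittD_map, wittD_map, map_mul, hfX, hgY] at happ
  have h1 : WittVector.truncateFun n (f.out * g.out) = f * g := rfl
  have h2 : WittVector.truncateFun n f.out = f := TruncatedWittVector.truncateFun_out f
  have h3 : WittVector.truncateFun n g.out = g := TruncatedWittVector.truncateFun_out g
  rw [h1, h2, h3] at happ
  rw [happ]
  have hs : ∀ (r : R₀) (m : Ω[A⁄ℤ]), r • m = algebraMap R₀ A r • m :=
    fun r m => (algebraMap_smul A r m).symm
  rw [hs, hs, hs, map_pow, map_pow, halg, halg]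
  have hp0 : algebraMap R₀ A (p : R₀) = 0 := by
    rw [map_natCast, CharP.cast_eq_zero]
  rw [hp0, zero_smul, add_zero]
  have hc0 : c (1, 0) = g.coeff ⟨0, hn⟩ := by
    simp only [c, if_neg (by decide : ¬(1 : Fin 2) = 0)]
    exact TruncatedWittVector.coeff_out g ⟨0, hn⟩
  have hc1 : c (0, 0) = f.coeff ⟨0, hn⟩ := by
    simp only [c, if_pos rfl]
    exact TruncatedWittVector.coeff_out f ⟨0, hn⟩
  rw [hc0, hc1]
end

section
/- Let A be a commutative ring of characteristic p with a p-basis and define B_n ⊂ Ω¹_A inductively by B₀ = 0 and B_{n+1} = {ω ∈ Z¹_A : C(ω) ∈ B_n}, where C is the Cartier operator. Then the image of D_n : W_n(A) → Ω¹_A, D_n(f₀,…,f_{n-1}) = d f_{n-1} + f_{n-2}^{p-1} d f_{n-2} + ⋯ + f₀^{p^{n-1}-1} d f₀, is exactly B_n. Equivalently: a closed 1-form ω satisfies C^n(ω) = 0 iff ω = d f_{n-1} + f_{n-2}^{p-1} d f_{n-2} + ⋯ + f₀^{p^{n-1}-1} d f₀ for some f₀,…,f_{n-1} ∈ A. -/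
/-- Let `A` be a commutative ring of characteristic `p` with a `p`-basis, and let `C` be the
Cartier operator (an additive operator on 1-forms satisfying `C(df) = 0`,
`C(f^p ω) = f C(ω)`, `C(f^{p-1} df) = df`, and whose kernel consists exactly of the exact
forms).  Then a 1-form `ω` satisfies `Cⁿ(ω) = 0` — i.e. `ω ∈ B_n`, where `B₀ = 0` and
`B_{n+1} = {ω : C(ω) ∈ B_n}` — if and only if
`ω = d f_{n-1} + f_{n-2}^{p-1} d f_{n-2} + ⋯ + f₀^{p^{n-1}-1} d f₀` for some
`f₀,…,f_{n-1} ∈ A`; that is, the image of `D_n : W_n(A) → Ω¹_A` is exactly `B_n`. -/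
theorem image_wittD_eq_Bn (p n : ℕ) [Fact p.Prime] {A : Type*} [CommRing A] [CharP A p]
    (Γ : Set A) (hΓ : IsPBasis p Γ)
    (C : Ω[A⁄ℤ] →+ Ω[A⁄ℤ])
    (hCd : ∀ f : A, C (KaehlerDifferential.D ℤ A f) = 0)
    (hCsemi : ∀ (f : A) (w : Ω[A⁄ℤ]), C (f ^ p • w) = f • C w)
    (hCpow : ∀ f : A,
      C (f ^ (p - 1) • KaehlerDifferential.D ℤ A f) = KaehlerDifferential.D ℤ A f)
    (hker : ∀ w : Ω[A⁄ℤ], C w = 0 → ∃ f : A, w = KaehlerDifferential.D ℤ A f)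
    (w : Ω[A⁄ℤ]) :
    (⇑C)^[n] w = 0 ↔
      ∃ f : Fin n → A, w = ∑ i : Fin n,
        (f i) ^ (p ^ (n - 1 - (i : ℕ)) - 1) • KaehlerDifferential.D ℤ A (f i) := by
  classical
  have hp : 1 ≤ p := (Fact.out : p.Prime).one_le
  have key : ∀ (f : A) (k : ℕ), 1 ≤ k →
      C (f ^ (p ^ k - 1) • KaehlerDifferential.D ℤ A f)
        = f ^ (p ^ (k - 1) - 1) • KaehlerDifferential.D ℤ A f := by
    intro f k hk
    have h1 : p ^ (k - 1) * p = p ^ k := by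
      rw [← pow_succ]
      congr 1
      omega
    have h3 : 1 ≤ p ^ (k - 1) := Nat.one_le_pow _ _ (by omega)
    have h4 : p ≤ p ^ k := by nlinarith
    have h5 : (p ^ (k - 1) - 1) * p = p ^ k - p := by
      rw [Nat.sub_mul, one_mul, h1]
    have h2 : p ^ k - 1 = (p ^ (k - 1) - 1) * p + (p - 1) := by omega
    have h6 : f ^ (p ^ k - 1) = (f ^ (p ^ (k - 1) - 1)) ^ p * f ^ (p - 1) := by
      rw [← pow_mul, ← pow_add, h2]
    rw [h6, mul_smul, hCsemi, hCpow]
  clear hΓ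
  induction n generalizing w with
  | zero =>
    simp only [Function.iterate_zero, id_eq]
    constructor
    · intro h; exact ⟨fun _ => 0, by simp [h]⟩
    · rintro ⟨f, rfl⟩; simp
  | succ n ih =>
    rw [Function.iterate_succ_apply]
    constructor
    · intro h0
      obtain ⟨g, hg⟩ := (ih (C w)).mp h0
      have hCω : C (∑ i : Fin n,
          (g i) ^ (p ^ (n - (i : ℕ)) - 1) • KaehlerDifferential.D ℤ A (g i)) = C w := by
        rw [map_sum, hg]
        refine Finset.sum_congr rfl fun i _ => ?_
        rw [key (g i) (n - (i : ℕ)) (by have := i.isLt; omega)]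
        have e2 : n - (i : ℕ) - 1 = n - 1 - (i : ℕ) := by omega
        rw [e2]
      obtain ⟨h, hh⟩ := hker (w - ∑ i : Fin n,
          (g i) ^ (p ^ (n - (i : ℕ)) - 1) • KaehlerDifferential.D ℤ A (g i))
        (by rw [map_sub, hCω, sub_self])
      refine ⟨Fin.snoc g h, ?_⟩
      have hw : w = (∑ i : Fin n,
          (g i) ^ (p ^ (n - (i : ℕ)) - 1) • KaehlerDifferential.D ℤ A (g i))
            + KaehlerDifferential.D ℤ A h := by
        rw [← hh]; abel
      rw [hw, Fin.sum_univ_castSucc]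
      simp [Fin.snoc_castSucc, Fin.snoc_last]
    · rintro ⟨f, hf⟩
      refine (ih (C w)).mpr ⟨fun i => f i.castSucc, ?_⟩
      have hlast : C ((f (Fin.last n)) ^ (p ^ (n + 1 - 1 - ((Fin.last n : Fin (n+1)) : ℕ)) - 1)
          • KaehlerDifferential.D ℤ A (f (Fin.last n))) = 0 := by
        have e : n + 1 - 1 - ((Fin.last n : Fin (n+1)) : ℕ) = 0 := by simp
        rw [e, pow_zero, Nat.sub_self, pow_zero, one_smul, hCd]
      rw [hf, map_sum, Fin.sum_univ_castSucc, hlast, add_zero]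
      refine Finset.sum_congr rfl fun i _ => ?_
      have e1 : n + 1 - 1 - ((Fin.castSucc i : Fin (n+1)) : ℕ) = n - (i : ℕ) := by simp
      rw [e1, key _ (n - (i : ℕ)) (by have := i.isLt; omega)]
      have e2 : n - (i : ℕ) - 1 = n - 1 - (i : ℕ) := by omega
      rw [e2]
end

section
/- Let K be a field of characteristic p and K_v = 𝔽((t)) a Laurent series field containing K (or any field extension with a derivation). For ω = f₀(x₁,…,x_d) dt + Σ_{i=1}^d f_i(x₁,…,x_d) dx_i a differential form on an open subset of affine d-space over K_v ≅ 𝔽((t)), the evaluation map sending a point u = (u₁,…,u_d) ∈ K_v^d to ω|_u = (f₀(u) + Σ_i f_i(u) u_i') dt ∈ Ω¹_{K_v} ≅ K_v dt is 𝔽((t))^p-semilinear in the derivative components; in particular if d = 1 and the map u ↦ f₀(u) + f₁(u)u' is constant on a nonempty open ball, then f₁ = 0 on that ball. -/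
open Multiplicative WithZero Filter HahnSeries

local notation "ℤₘ₀" => WithZero (Multiplicative ℤ)

namespace EvalAux


lemma wmul (s t : ℤ) :
    ((ofAdd s : Multiplicative ℤ) : ℤₘ₀) * ((ofAdd t : Multiplicative ℤ) : ℤₘ₀)
      = ((ofAdd (s + t) : Multiplicative ℤ) : ℤₘ₀) := by
  rw [← WithZero.coe_mul, ← ofAdd_add]

lemma wpow (s : ℤ) (n : ℕ) :
    (((ofAdd s : Multiplicative ℤ) : ℤₘ₀)) ^ n
      = ((ofAdd ((n : ℤ) * s) : Multiplicative ℤ) : ℤₘ₀) := by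
  rw [← WithZero.coe_pow, ← ofAdd_nsmul, nsmul_eq_mul]

lemma wle (s t : ℤ) :
    ((ofAdd s : Multiplicative ℤ) : ℤₘ₀) ≤ ((ofAdd t : Multiplicative ℤ) : ℤₘ₀) ↔ s ≤ t := by
  rw [WithZero.coe_le_coe]; exact Multiplicative.ofAdd_le

lemma wmul_le_iff (x : ℤₘ₀) (s t : ℤ) :
    x * ((ofAdd s : Multiplicative ℤ) : ℤₘ₀) ≤ ((ofAdd t : Multiplicative ℤ) : ℤₘ₀)
      ↔ x ≤ ((ofAdd (t - s) : Multiplicative ℤ) : ℤₘ₀) := by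
  constructor <;> intro h
  · have h2 := mul_le_mul_left h ((ofAdd (-s) : Multiplicative ℤ) : ℤₘ₀)
    rw [mul_assoc, wmul, wmul, add_neg_cancel, ofAdd_zero, WithZero.coe_one, mul_one,
      ← sub_eq_add_neg] at h2
    exact h2
  · have h2 := mul_le_mul_left h ((ofAdd s : Multiplicative ℤ) : ℤₘ₀)
    rw [wmul, sub_add_cancel] at h2
    exact h2

variable {R : Type*} [CommRing R] {Γ : Type*} [LinearOrderedCommGroupWithZero Γ]
  [Valued R Γ]

lemma hasSum_val_le {f : ℕ → R} {S : R} (h : HasSum f S) {γ : Γ}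
    (hf : ∀ i, Valued.v (f i) ≤ γ) : Valued.v S ≤ γ := by
  by_contra hlt
  push_neg at hlt
  have hS0 : Valued.v S ≠ 0 := ne_of_gt (lt_of_le_of_lt zero_le' hlt)
  have hmem : {y : R | Valued.v (y - S) < Valued.v S} ∈ nhds S := by
    rw [Valued.mem_nhds]
    exact ⟨Units.mk0 (Valued.v.restrict S) (by simpa [Valuation.restrict_eq_zero_iff] using hS0),
      fun y hy => by simpa [Valuation.restrict_lt_iff] using hy⟩
  obtain ⟨n, hn⟩ := (h.tendsto_sum_nat.eventually
    (eventually_of_mem hmem (fun y hy => hy))).exists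
  have h1 : Valued.v (∑ i ∈ Finset.range n, f i) ≤ γ :=
    Valuation.map_sum_le _ (fun i _ => hf i)
  have h2 : Valued.v (∑ i ∈ Finset.range n, f i) = Valued.v S := by
    have := Valued.v.map_add_eq_of_lt_right (x := (∑ i ∈ Finset.range n, f i) - S)
      (y := S) hn
    simpa using this
  exact absurd (h2 ▸ h1) (not_le.mpr hlt)

/-- Key lemma: a power series over a Laurent series field that sums to `0` at points
`single N 1` for arbitrarily large `N` has all coefficients zero. -/
lemma key_vanish {K : Type*} [Field K] (c : ℕ → LaurentSeries K)
    (hvan : ∀ n : ℕ, ∃ N : ℕ, n ≤ N ∧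
      HasSum (fun k => c k * (HahnSeries.single (N : ℤ) (1 : K)) ^ k) 0) :
    ∀ k, c k = 0 := by
  -- fix a convergence point `ρ` to get a growth bound on the `c k`
  obtain ⟨N₀, hN₀, hρ⟩ := hvan 1
  set ρ : LaurentSeries K := HahnSeries.single (N₀ : ℤ) 1 with hρdef
  have hvρ : Valued.v ρ = ((ofAdd (-(N₀ : ℤ)) : Multiplicative ℤ) : ℤₘ₀) :=
    LaurentSeries.valuation_single_zpow (K := K) (N₀ : ℤ)
  have htend : Tendsto (fun k => c k * ρ ^ k) atTop (nhds 0) :=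
    hρ.summable.tendsto_atTop_zero
  have hball : {x : LaurentSeries K | Valued.v x < (1 : ℤₘ₀)} ∈ nhds (0 : LaurentSeries K) := by
    rw [Valued.mem_nhds_zero]
    exact ⟨1, fun y hy => by simpa using hy⟩
  obtain ⟨K₁, hK₁⟩ := eventually_atTop.mp
    (htend.eventually (eventually_of_mem hball (fun y hy => hy)))
  set β : ℤₘ₀ := max 1 ((Finset.range K₁).sup fun k => Valued.v (c k * ρ ^ k)) with hβdef
  have hβ : ∀ k, Valued.v (c k * ρ ^ k) ≤ β := by
    intro k
    rw [hβdef]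
    rcases lt_or_ge k K₁ with h | h
    · exact le_trans (Finset.le_sup (f := fun k => Valued.v (c k * ρ ^ k)) (Finset.mem_range.mpr h)) le_sup_right
    · exact le_trans (hK₁ k h).le le_sup_left
  have hβne : β ≠ 0 := by
    intro h
    have : (1 : ℤₘ₀) ≤ β := le_sup_left
    rw [h] at this
    exact absurd this (by simp)
  set B : Multiplicative ℤ := WithZero.unzero hβne with hBdef
  have hβB : β = ((B : Multiplicative ℤ) : ℤₘ₀) := (WithZero.coe_unzero hβne).symm
  -- growth bound
  have hcB : ∀ k : ℕ, Valued.v (c k) ≤ ((ofAdd (B.toAdd + (N₀ : ℤ) * k) : Multiplicative ℤ) : ℤₘ₀) := by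
    intro k
    have h1 : Valued.v (c k) * ((ofAdd ((k : ℤ) * (-(N₀ : ℤ))) : Multiplicative ℤ) : ℤₘ₀)
        ≤ ((ofAdd B.toAdd : Multiplicative ℤ) : ℤₘ₀) := by
      have := hβ k
      rw [hβB, Valued.v.map_mul, Valued.v.map_pow, hvρ, wpow] at this
      simpa using this
    have h2 := (wmul_le_iff _ _ _).mp h1
    have h3 : B.toAdd - (k : ℤ) * -(N₀ : ℤ) = B.toAdd + (N₀ : ℤ) * k := by ring
    rwa [h3] at h2
  intro k
  induction k using Nat.strong_induction_on with
  | _ k₀ IH =>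
  by_contra hne
  have hvne : Valued.v (c k₀) ≠ 0 := (Valuation.ne_zero_iff _).mpr hne
  set γ : Multiplicative ℤ := WithZero.unzero hvne with hγdef
  have hγ : Valued.v (c k₀) = ((γ : Multiplicative ℤ) : ℤₘ₀) := (WithZero.coe_unzero hvne).symm
  -- pick a large N
  obtain ⟨N, hNge, hS⟩ := hvan (max N₀ ((B.toAdd + (N₀ : ℤ) * (k₀ + 1) - γ.toAdd).toNat + 1))
  have hN₀le : N₀ ≤ N := le_trans (le_max_left _ _) hNge
  have hNbig : B.toAdd + (N₀ : ℤ) * (k₀ + 1) - γ.toAdd + 1 ≤ (N : ℤ) := by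
    have h1 : (B.toAdd + (N₀ : ℤ) * (k₀ + 1) - γ.toAdd).toNat + 1 ≤ N :=
      le_trans (le_max_right _ _) hNge
    have h2 := Int.self_le_toNat (B.toAdd + (N₀ : ℤ) * (k₀ + 1) - γ.toAdd)
    have h3 : ((B.toAdd + (N₀ : ℤ) * (k₀ + 1) - γ.toAdd).toNat + 1 : ℤ) ≤ (N : ℤ) := by
      exact_mod_cast h1
    omega
  set ζ : LaurentSeries K := HahnSeries.single (N : ℤ) 1 with hζdef
  have hvζ : Valued.v ζ = ((ofAdd (-(N : ℤ)) : Multiplicative ℤ) : ℤₘ₀) :=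
    LaurentSeries.valuation_single_zpow (K := K) (N : ℤ)
  set G : ℕ → LaurentSeries K := fun j => c (j + k₀) * ζ ^ (j + k₀) with hGdef
  have hG : HasSum G 0 := by
    refine (hasSum_nat_add_iff (f := fun k => c k * ζ ^ k) k₀).mpr ?_
    have hzero : (∑ i ∈ Finset.range k₀, c i * ζ ^ i) = 0 :=
      Finset.sum_eq_zero (fun i hi => by rw [IH i (Finset.mem_range.mp hi), zero_mul])
    rw [hzero, add_zero]
    exact hS
  have hG1 : HasSum (fun j => G (j + 1)) (-(G 0)) := by
    refine (hasSum_nat_add_iff (f := G) 1).mpr ?_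
    simpa using hG
  -- per-term bound
  have hterm : ∀ j : ℕ, Valued.v (G (j + 1))
      ≤ ((ofAdd (B.toAdd + ((N₀ : ℤ) - N) * (k₀ + 1)) : Multiplicative ℤ) : ℤₘ₀) := by
    intro j
    set M : ℕ := j + 1 + k₀ with hMdef
    have hvG : Valued.v (G (j + 1)) = Valued.v (c M) *
        ((ofAdd ((M : ℤ) * (-(N : ℤ))) : Multiplicative ℤ) : ℤₘ₀) := by
      rw [hGdef]
      simp only [Valued.v.map_mul, Valued.v.map_pow, hvζ, wpow]
      rfl
    rw [hvG]
    calc Valued.v (c M) * ((ofAdd ((M : ℤ) * (-(N : ℤ))) : Multiplicative ℤ) : ℤₘ₀)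
        ≤ ((ofAdd (B.toAdd + (N₀ : ℤ) * M) : Multiplicative ℤ) : ℤₘ₀)
          * ((ofAdd ((M : ℤ) * (-(N : ℤ))) : Multiplicative ℤ) : ℤₘ₀) :=
          mul_le_mul_left (hcB M) _
      _ = ((ofAdd (B.toAdd + (N₀ : ℤ) * M + (M : ℤ) * (-(N : ℤ))) : Multiplicative ℤ) : ℤₘ₀) :=
          wmul _ _
      _ ≤ ((ofAdd (B.toAdd + ((N₀ : ℤ) - N) * (k₀ + 1)) : Multiplicative ℤ) : ℤₘ₀) := by
          rw [wle]
          have hM : (k₀ : ℤ) + 1 ≤ (M : ℤ) := by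
            rw [hMdef]; push_cast; omega
          have hNN : (N₀ : ℤ) - N ≤ 0 := by
            have : (N₀ : ℤ) ≤ N := by exact_mod_cast hN₀le
            omega
          nlinarith
  have hle := hasSum_val_le hG1 hterm
  rw [Valued.v.map_neg] at hle
  have hG0 : Valued.v (G 0) = ((γ : Multiplicative ℤ) : ℤₘ₀)
      * ((ofAdd ((k₀ : ℤ) * (-(N : ℤ))) : Multiplicative ℤ) : ℤₘ₀) := by
    rw [hGdef]
    simp only [zero_add, Valued.v.map_mul, Valued.v.map_pow, hvζ, wpow, hγ]
  rw [hG0] at hle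
  have hle2 : ((ofAdd (γ.toAdd + (k₀ : ℤ) * (-(N : ℤ))) : Multiplicative ℤ) : ℤₘ₀)
      ≤ ((ofAdd (B.toAdd + ((N₀ : ℤ) - N) * (k₀ + 1)) : Multiplicative ℤ) : ℤₘ₀) := by
    rw [← wmul, ofAdd_toAdd]
    exact hle
  rw [wle] at hle2
  nlinarith [hle2, hNbig]

end EvalAux

open EvalAux Multiplicative WithZero


/-- Let `K_v = 𝔽((t))` be a Laurent series field over a finite field `𝔽 = 𝔽_q`, `q = p^m`,
with the formal derivative `der : u ↦ u'` (characterized coefficientwise).  Identify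
`Ω¹_{K_v} ≅ K_v·dt` via the `p`-basis `{t}`, so that a 1-form `ω = f₀ dt + f₁ dx` on an open
subset of the affine line evaluates at a point `u` to `(f₀(u) + f₁(u)·u')·dt`.  If `f₀, f₁`
are analytic (given by convergent power series) on a nonempty open ball around `u`, and the
evaluation map `u + ε ↦ f₀(u+ε) + f₁(u+ε)·(u+ε)'` is constant on that ball, then `f₁`
vanishes identically on the ball. -/
theorem eval_constant_implies_f1_zero (p m : ℕ) [Fact p.Prime]
    (der : LaurentSeries (GaloisField p m) → LaurentSeries (GaloisField p m))
    (hder : ∀ (f : LaurentSeries (GaloisField p m)) (i : ℤ),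
      (der f).coeff i = (i + 1) • f.coeff (i + 1))
    (f₀ f₁ : LaurentSeries (GaloisField p m) → LaurentSeries (GaloisField p m))
    (u : LaurentSeries (GaloisField p m))
    (r : WithZero (Multiplicative ℤ)) (hr : r ≠ 0)
    (a b : ℕ → LaurentSeries (GaloisField p m))
    (ha : ∀ ε : LaurentSeries (GaloisField p m), Valued.v ε < r →
      HasSum (fun k : ℕ => a k * ε ^ k) (f₀ (u + ε)))
    (hb : ∀ ε : LaurentSeries (GaloisField p m), Valued.v ε < r →
      HasSum (fun k : ℕ => b k * ε ^ k) (f₁ (u + ε)))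
    (hconst : ∀ ε : LaurentSeries (GaloisField p m), Valued.v ε < r →
      f₀ (u + ε) + f₁ (u + ε) * der (u + ε) = f₀ u + f₁ u * der u) :
    ∀ ε : LaurentSeries (GaloisField p m), Valued.v ε < r → f₁ (u + ε) = 0 := by
  set K := GaloisField p m with hK
  have hp1 : 1 ≤ p := (Fact.out : p.Prime).one_lt.le
  -- additivity of `der`
  have hder_add : ∀ f g : LaurentSeries K, der (f + g) = der f + der g := by
    intro f g
    ext i
    simp only [HahnSeries.coeff_add, hder, smul_add]
  -- `der` on monomials
  have hder_single : ∀ (n : ℕ) (x : K),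
      der (HahnSeries.single (n : ℤ) x) = HahnSeries.single ((n : ℤ) - 1) ((n : ℤ) • x) := by
    intro n x
    ext i
    rw [hder, HahnSeries.coeff_single, HahnSeries.coeff_single]
    by_cases h : i + 1 = (n : ℤ)
    · rw [if_pos h, if_pos (by omega), h]
    · rw [if_neg h, if_neg (by omega), smul_zero]
  have hder_pmul : ∀ n : ℕ, der (HahnSeries.single ((p * n : ℕ) : ℤ) (1 : K)) = 0 := by
    intro n
    rw [hder_single]
    have : ((p * n : ℕ) : ℤ) • (1 : K) = 0 := by
      rw [zsmul_eq_mul, mul_one]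
      push_cast
      rw [CharP.cast_eq_zero K p, zero_mul]
    rw [this, HahnSeries.single_eq_zero]
  have hder_pmul1 : ∀ n : ℕ, der (HahnSeries.single ((p * n + 1 : ℕ) : ℤ) (1 : K))
      = HahnSeries.single ((p * n : ℕ) : ℤ) (1 : K) := by
    intro n
    rw [hder_single]
    congr 1
    · push_cast; ring
    · rw [zsmul_eq_mul, mul_one]
      push_cast
      rw [CharP.cast_eq_zero K p, zero_mul, zero_add]
  -- ball membership for monomials
  set rγ : Multiplicative ℤ := WithZero.unzero hr with hrγdef
  have hrr : ((rγ : Multiplicative ℤ) : WithZero (Multiplicative ℤ)) = r := WithZero.coe_unzero hr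
  set N₂ : ℕ := (-rγ.toAdd).toNat + 1 with hN₂def
  have hmem : ∀ N : ℕ, N₂ ≤ N → Valued.v (HahnSeries.single (N : ℤ) (1 : K)) < r := by
    intro N hN
    rw [LaurentSeries.valuation_single_zpow (K := K) (N : ℤ), ← hrr, WithZero.exp, WithZero.coe_lt_coe,
      ← ofAdd_toAdd rγ, Multiplicative.ofAdd_lt]
    have h2 := Int.self_le_toNat (-rγ.toAdd)
    have h3 : ((-rγ.toAdd).toNat + 1 : ℤ) ≤ (N : ℤ) := by exact_mod_cast hN
    omega
  -- value at `0`
  have h0r : Valued.v (0 : LaurentSeries K) < r := by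
    rw [map_zero]
    exact lt_of_le_of_ne zero_le' (Ne.symm hr)
  have hf₀u : f₀ u = a 0 := by
    have H := ha 0 h0r
    rw [add_zero] at H
    have H2 : HasSum (fun k : ℕ => a k * (0 : LaurentSeries K) ^ k) (a 0) := by
      have := hasSum_single (f := fun k : ℕ => a k * (0 : LaurentSeries K) ^ k) 0
        (fun k hk => by simp [zero_pow hk])
      simpa using this
    exact H.unique H2
  have hf₁u : f₁ u = b 0 := by
    have H := hb 0 h0r
    rw [add_zero] at H
    have H2 : HasSum (fun k : ℕ => b k * (0 : LaurentSeries K) ^ k) (b 0) := by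
      have := hasSum_single (f := fun k : ℕ => b k * (0 : LaurentSeries K) ^ k) 0
        (fun k hk => by simp [zero_pow hk])
      simpa using this
    exact H.unique H2
  set d : ℕ → LaurentSeries K := fun k => a k + b k * der u with hddef
  -- the combined sum
  have hDsum : ∀ ζ : LaurentSeries K, Valued.v ζ < r →
      HasSum (fun k : ℕ => d k * ζ ^ k) (f₀ (u + ζ) + f₁ (u + ζ) * der u) := by
    intro ζ hζ
    have H := (ha ζ hζ).add ((hb ζ hζ).mul_right (der u))
    have hfun : (fun k : ℕ => a k * ζ ^ k + b k * ζ ^ k * der u)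
        = fun k : ℕ => d k * ζ ^ k := by
      funext k
      rw [hddef]
      ring
    rwa [hfun] at H
  -- step 1: all the `d k`, `k ≥ 1`, vanish
  set e : ℕ → LaurentSeries K := fun k => if k = 0 then 0 else d k with hedef
  have hvan_e : ∀ n : ℕ, ∃ N : ℕ, n ≤ N ∧
      HasSum (fun k : ℕ => e k * (HahnSeries.single (N : ℤ) (1 : K)) ^ k) 0 := by
    intro n
    have hMn : n ≤ max n N₂ := le_max_left _ _
    have hMN₂ : N₂ ≤ max n N₂ := le_max_right _ _
    have hMp : max n N₂ ≤ p * max n N₂ := Nat.le_mul_of_pos_left _ (by omega)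
    refine ⟨p * max n N₂, by omega, ?_⟩
    have hζr : Valued.v (HahnSeries.single ((p * max n N₂ : ℕ) : ℤ) (1 : K)) < r :=
      hmem _ (by omega)
    have Hd := hDsum _ hζr
    have htar : f₀ (u + HahnSeries.single ((p * max n N₂ : ℕ) : ℤ) (1 : K))
        + f₁ (u + HahnSeries.single ((p * max n N₂ : ℕ) : ℤ) (1 : K)) * der u = d 0 := by
      have hc := hconst _ hζr
      rw [hder_add, hder_pmul, add_zero] at hc
      rw [hc, hf₀u, hf₁u]
    rw [htar] at Hd
    have Hite : HasSum (fun k : ℕ => if k = 0 then d 0 else 0) (d 0) := hasSum_ite_eq 0 (d 0)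
    have He := Hd.sub Hite
    rw [sub_self] at He
    have hfun : (fun k : ℕ => d k * (HahnSeries.single ((p * max n N₂ : ℕ) : ℤ) (1 : K)) ^ k
          - if k = 0 then d 0 else 0)
        = fun k : ℕ => e k * (HahnSeries.single ((p * max n N₂ : ℕ) : ℤ) (1 : K)) ^ k := by
      funext k
      by_cases hk : k = 0
      · subst hk
        simp [hedef]
      · simp [hedef, hk]
    rwa [hfun] at He
  have hd : ∀ k : ℕ, k ≠ 0 → d k = 0 := by
    intro k hk
    have := key_vanish e hvan_e k
    simpa [hedef, hk] using this
  -- step 2: all the `b k` vanish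
  have hvan_b : ∀ n : ℕ, ∃ N : ℕ, n ≤ N ∧
      HasSum (fun k : ℕ => b k * (HahnSeries.single (N : ℤ) (1 : K)) ^ k) 0 := by
    intro n
    have hMn : n ≤ max n N₂ := le_max_left _ _
    have hMN₂ : N₂ ≤ max n N₂ := le_max_right _ _
    have hMp : max n N₂ ≤ p * max n N₂ := Nat.le_mul_of_pos_left _ (by omega)
    refine ⟨p * max n N₂ + 1, by omega, ?_⟩
    have hζr : Valued.v (HahnSeries.single ((p * max n N₂ + 1 : ℕ) : ℤ) (1 : K)) < r :=
      hmem _ (by omega)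
    have Hd := hDsum _ hζr
    have Hd2 : HasSum (fun k : ℕ =>
        d k * (HahnSeries.single ((p * max n N₂ + 1 : ℕ) : ℤ) (1 : K)) ^ k) (d 0) := by
      have := hasSum_single (f := fun k : ℕ =>
          d k * (HahnSeries.single ((p * max n N₂ + 1 : ℕ) : ℤ) (1 : K)) ^ k) 0
        (fun k hk => by simp [hd k hk])
      simpa using this
    have htar := Hd.unique Hd2
    have hc := hconst _ hζr
    rw [hder_add, hder_pmul1, hf₀u, hf₁u, mul_add, ← add_assoc] at hc
    rw [htar] at hc
    have hz : f₁ (u + HahnSeries.single ((p * max n N₂ + 1 : ℕ) : ℤ) (1 : K))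
        * HahnSeries.single ((p * max n N₂ : ℕ) : ℤ) (1 : K) = 0 := by
      have h4 : d 0 = a 0 + b 0 * der u := rfl
      rw [← h4] at hc
      exact (add_eq_left).mp hc
    have hf1 : f₁ (u + HahnSeries.single ((p * max n N₂ + 1 : ℕ) : ℤ) (1 : K)) = 0 := by
      rcases mul_eq_zero.mp hz with h | h
      · exact h
      · exact absurd h (HahnSeries.single_ne_zero one_ne_zero)
    have Hb := hb _ hζr
    rwa [hf1] at Hb
  have hbz := key_vanish b hvan_b
  intro ε hε
  have H := hb ε hε
  have H2 : HasSum (fun k : ℕ => b k * ε ^ k) 0 := by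
    simp only [hbz, zero_mul]
    exact hasSum_zero
  exact H.unique H2
end

section
/- Let K = 𝔽((x)) (or K((x)) for any field K of characteristic p) and let f(x) ∈ K^{p^n}((x)). Then the form ω = f(x) dx can be written as ω = d(f₁) + f₂^{p-1} d(f₂) + ⋯ + f_n^{p^{n-1}-1} d(f_n) + h(x)^{p^n} x^{p^n} dlog(x) for some f₁,…,f_n, h ∈ K((x)). -/
/-- The variable `x` of the Laurent series field `K((x))`. -/
noncomputable def lsVar (K : Type*) [Field K] : LaurentSeries K := HahnSeries.single (1 : ℤ) 1

set_option linter.unusedSectionVars false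

namespace LaurentBn

open HahnSeries Finset

variable {p : ℕ} [hp : Fact p.Prime] {K : Type*} [Field K] [CharP K p]

lemma ppos : 0 < p := hp.out.pos

lemma p2 : 2 ≤ p := hp.out.two_le

instance : CharP (LaurentSeries K) p :=
  charP_of_injective_ringHom (f := HahnSeries.C (Γ := ℤ) (R := K)) HahnSeries.C_injective p

lemma intCast_pow_char (j : ℤ) : (j : K) ^ p = (j : K) := by
  induction j using Int.induction_on with
  | zero => simp [hp.out.ne_zero]
  | succ k ih => push_cast; rw [add_pow_char]; simp only [one_pow]; push_cast at ih; rw [ih]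
  | pred k ih => push_cast; rw [sub_pow_char]; simp only [one_pow]; push_cast at ih; rw [ih]

lemma isPWO_of_bdd {S : Set ℤ} {b : ℤ} (hb : ∀ x ∈ S, b ≤ x) : S.IsPWO := by
  refine Set.IsWF.isPWO ?_
  rw [Set.isWF_iff_no_descending_seq]
  intro f hf hmem
  have hmem' : ∀ n : ℕ, f n ∈ S := fun n => hmem n
  have key : ∀ n : ℕ, f n ≤ f 0 - n := by
    intro n
    induction n with
    | zero => simp
    | succ k ih =>
      have h4 : f (k + 1) < f k := hf (by omega)
      push_cast
      omega
  have h1 := hb _ (hmem' (f 0 - b + 1).toNat)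
  have h2 := key (f 0 - b + 1).toNat
  have h3 := hb _ (hmem' 0)
  omega

/-- Build a Laurent series from a coefficient function vanishing below a bound. -/
def mkLS (c : ℤ → K) (b : ℤ) (hc : ∀ i, i < b → c i = 0) : LaurentSeries K :=
  ⟨c, isPWO_of_bdd (b := b) (fun x hx => by
    by_contra h
    exact hx (hc x (by omega)))⟩

@[simp] lemma mkLS_coeff (c : ℤ → K) (b : ℤ) (hc : ∀ i, i < b → c i = 0) (i : ℤ) :
    (mkLS c b hc).coeff i = c i := rfl

open Classical in
/-- Restriction of a Laurent series to indices satisfying a predicate. -/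
noncomputable def restrict (v : LaurentSeries K) (P : ℤ → Prop) : LaurentSeries K :=
  ⟨fun i => if P i then v.coeff i else 0, v.isPWO_support'.mono (fun i hi => by
    simp only [Function.mem_support] at hi ⊢
    intro h
    apply hi
    split_ifs <;> simp [h])⟩

open Classical in
lemma restrict_coeff (v : LaurentSeries K) (P : ℤ → Prop) (i : ℤ) :
    (restrict v P).coeff i = if P i then v.coeff i else 0 := rfl

lemma exists_lb (v : LaurentSeries K) : ∃ b : ℤ, ∀ i, i < b → v.coeff i = 0 := by
  rcases eq_or_ne v 0 with rfl | h
  · exact ⟨0, by simp⟩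
  · exact ⟨v.order, fun i hi => coeff_eq_zero_of_lt_order hi⟩


variable (der : LaurentSeries K → LaurentSeries K)
  (hder : ∀ (f : LaurentSeries K) (i : ℤ), (der f).coeff i = (i + 1) • f.coeff (i + 1))
include hder

lemma der_res (u : LaurentSeries K) (i : ℤ) (h : ((i + 1 : ℤ) : K) = 0) :
    (der u).coeff i = 0 := by
  rw [hder, zsmul_eq_mul, h, zero_mul]

lemma der_add (a b : LaurentSeries K) : der (a + b) = der a + der b := by
  ext i; simp [hder, smul_add]

lemma der_zero : der 0 = 0 := by
  ext i; simp [hder]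

lemma der_sum {ι : Type*} (S : Finset ι) (f : ι → LaurentSeries K) :
    der (∑ i ∈ S, f i) = ∑ i ∈ S, der (f i) := by
  classical
  induction S using Finset.cons_induction with
  | empty => simpa using der_zero der hder
  | cons a S ha ih => rw [Finset.sum_cons, der_add der hder, ih, Finset.sum_cons]

lemma der_single (a : ℤ) (c : K) : der (HahnSeries.single a c) = HahnSeries.single (a - 1) (a • c) := by
  ext i
  rw [hder]
  rcases eq_or_ne i (a - 1) with h | h
  · have h1 : i + 1 = a := by omega
    rw [h1, h, coeff_single_same, coeff_single_same]
  · rw [coeff_single_of_ne (by omega), coeff_single_of_ne h, smul_zero]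

lemma der_mul (a b : LaurentSeries K) : der (a * b) = der a * b + a * der b := by
  obtain ⟨ba, hba⟩ := exists_lb a
  obtain ⟨bb, hbb⟩ := exists_lb b
  have hTa : ({x : ℤ | x + 1 ∈ a.support} : Set ℤ).IsPWO :=
    isPWO_of_bdd (b := ba - 1) (fun x hx => by
      by_contra h
      exact (hx : a.coeff (x + 1) ≠ 0) (hba _ (by omega)))
  have hTb : ({x : ℤ | x + 1 ∈ b.support} : Set ℤ).IsPWO :=
    isPWO_of_bdd (b := bb - 1) (fun x hx => by
      by_contra h
      exact (hx : b.coeff (x + 1) ≠ 0) (hbb _ (by omega)))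
  have hsa : (der a).support ⊆ {x : ℤ | x + 1 ∈ a.support} := by
    intro x hx
    have hx' : (der a).coeff x ≠ 0 := hx
    rw [hder] at hx'
    simp only [Set.mem_setOf_eq, mem_support]
    intro h0
    exact hx' (by rw [h0, smul_zero])
  have hsb : (der b).support ⊆ {x : ℤ | x + 1 ∈ b.support} := by
    intro x hx
    have hx' : (der b).coeff x ≠ 0 := hx
    rw [hder] at hx'
    simp only [Set.mem_setOf_eq, mem_support]
    intro h0
    exact hx' (by rw [h0, smul_zero])
  ext i
  rw [coeff_add, hder, coeff_mul, coeff_mul_left' hTa hsa, coeff_mul_right' hTb hsb,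
    Finset.smul_sum]
  have e0 : ∀ q ∈ Finset.antidiagonal a.isPWO_support b.isPWO_support (i + 1),
      (i + 1) • (a.coeff q.1 * b.coeff q.2)
        = (q.1 • a.coeff q.1) * b.coeff q.2 + a.coeff q.1 * (q.2 • b.coeff q.2) := by
    intro q hq
    rw [mem_addAntidiagonal] at hq
    rw [← hq.2.2, add_zsmul, smul_mul_assoc, mul_smul_comm]
  rw [Finset.sum_congr rfl e0, Finset.sum_add_distrib]
  have e1 : ∑ q ∈ Finset.antidiagonal a.isPWO_support b.isPWO_support (i + 1),
      (q.1 • a.coeff q.1) * b.coeff q.2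
      = ∑ q ∈ Finset.antidiagonal hTa b.isPWO_support i, (der a).coeff q.1 * b.coeff q.2 := by
    refine Finset.sum_nbij' (fun q => (q.1 - 1, q.2)) (fun q => (q.1 + 1, q.2)) ?_ ?_ ?_ ?_ ?_
    · intro q hq
      rw [mem_addAntidiagonal] at hq ⊢
      refine ⟨by simp only [Set.mem_setOf_eq]; rw [sub_add_cancel]; exact hq.1, hq.2.1, by dsimp only; omega⟩
    · intro q hq
      rw [mem_addAntidiagonal] at hq ⊢
      exact ⟨hq.1, hq.2.1, by dsimp only; omega⟩
    · intro q hq; simp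
    · intro q hq; simp
    · intro q hq
      rw [hder]
      rw [sub_add_cancel]
  have e2 : ∑ q ∈ Finset.antidiagonal a.isPWO_support b.isPWO_support (i + 1),
      a.coeff q.1 * (q.2 • b.coeff q.2)
      = ∑ q ∈ Finset.antidiagonal a.isPWO_support hTb i, a.coeff q.1 * (der b).coeff q.2 := by
    refine Finset.sum_nbij' (fun q => (q.1, q.2 - 1)) (fun q => (q.1, q.2 + 1)) ?_ ?_ ?_ ?_ ?_
    · intro q hq
      rw [mem_addAntidiagonal] at hq ⊢
      refine ⟨hq.1, by simp only [Set.mem_setOf_eq]; rw [sub_add_cancel]; exact hq.2.1, by dsimp only; omega⟩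
    · intro q hq
      rw [mem_addAntidiagonal] at hq ⊢
      exact ⟨hq.1, hq.2.1, by dsimp only; omega⟩
    · intro q hq; simp
    · intro q hq; simp
    · intro q hq
      rw [hder]
      rw [sub_add_cancel]
  rw [e1, e2]


lemma der_pow (u : LaurentSeries K) : ∀ k : ℕ, der (u ^ (k + 1)) = (k + 1) • (u ^ k * der u) := by
  intro k
  induction k with
  | zero => rw [pow_one, pow_zero, one_mul]; norm_num
  | succ k ih =>
    rw [pow_succ, der_mul der hder, ih, smul_mul_assoc]
    have h1 : u ^ k * der u * u = u ^ (k + 1) * der u := by ring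
    rw [h1]
    simp only [add_smul, one_smul]

lemma der_pow_char (u : LaurentSeries K) : der (u ^ p) = 0 := by
  have h : p - 1 + 1 = p := by have := p2 (p := p); omega
  rw [← h, der_pow der hder, nsmul_eq_mul]
  have h2 : ((p - 1 + 1 : ℕ) : LaurentSeries K) = 0 := by
    rw [h]; exact CharP.cast_eq_zero _ p
  rw [h2, zero_mul]


omit hder

lemma coeff_sum {ι : Type*} (S : Finset ι) (f : ι → LaurentSeries K) (i : ℤ) :
    (∑ a ∈ S, f a).coeff i = ∑ a ∈ S, (f a).coeff i :=
  map_sum (HahnSeries.coeff.addMonoidHom i) f S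

lemma sum_single_repr (u : LaurentSeries K) (hfin : u.support.Finite) :
    u = ∑ a ∈ hfin.toFinset, HahnSeries.single a (u.coeff a) := by
  ext i
  rw [coeff_sum, Finset.sum_eq_single i (fun b _ hbi => coeff_single_of_ne (Ne.symm hbi))
    (fun hi => by
      rw [coeff_single_same]
      by_contra h
      exact hi (hfin.mem_toFinset.mpr h)), coeff_single_same]

noncomputable def trunc (v : LaurentSeries K) (B : ℤ) : LaurentSeries K :=
  restrict v (fun i => i ≤ B)

lemma trunc_coeff (v : LaurentSeries K) (B i : ℤ) :
    (trunc v B).coeff i = if i ≤ B then v.coeff i else 0 := by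
  rw [trunc, restrict_coeff]
  congr

lemma trunc_support_finite (v : LaurentSeries K) (B : ℤ) : (trunc v B).support.Finite := by
  obtain ⟨b, hb⟩ := exists_lb v
  apply (Set.finite_Icc b B).subset
  intro i hi
  have hi' : (trunc v B).coeff i ≠ 0 := hi
  rw [trunc_coeff] at hi'
  rw [Set.mem_Icc]
  by_cases hiB : i ≤ B
  · rw [if_pos hiB] at hi'
    exact ⟨by by_contra h; exact hi' (hb i (by omega)), hiB⟩
  · rw [if_neg hiB] at hi'
    exact absurd rfl hi'

lemma tail_coeff_zero (v : LaurentSeries K) (B : ℤ) (a : ℤ) (ha : a ≤ B) :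
    (v - trunc v B).coeff a = 0 := by
  rw [HahnSeries.coeff_sub, trunc_coeff, if_pos ha, sub_self]

lemma mul_coeff_zero_of_lb (u w : LaurentSeries K) (A B : ℤ)
    (hu : ∀ a, a ≤ A → u.coeff a = 0) (hw : ∀ b', b' ≤ B → w.coeff b' = 0) :
    ∀ i, i ≤ A + B + 1 → (u * w).coeff i = 0 := by
  intro i hi
  rw [HahnSeries.coeff_mul]
  refine Finset.sum_eq_zero fun q hq => ?_
  rw [Finset.mem_addAntidiagonal] at hq
  obtain ⟨h1, h2, h3⟩ := hq
  have hu' : ¬ q.1 ≤ A := fun h => (HahnSeries.mem_support _ _).mp h1 (hu _ h)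
  have hw' : ¬ q.2 ≤ B := fun h => (HahnSeries.mem_support _ _).mp h2 (hw _ h)
  exfalso
  omega

lemma pow_coeff_zero_of_lb (w : LaurentSeries K) (B : ℤ)
    (hw : ∀ a, a ≤ B → w.coeff a = 0) :
    ∀ k : ℕ, ∀ i : ℤ, i ≤ (k + 1) * (B + 1) - 1 → (w ^ (k + 1)).coeff i = 0 := by
  intro k
  induction k with
  | zero => intro i hi; rw [pow_one]; exact hw i (by push_cast at hi; omega)
  | succ k ih =>
    intro i hi
    rw [pow_succ]
    refine mul_coeff_zero_of_lb _ _ ((k + 1) * (B + 1) - 1) B ih hw i ?_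
    push_cast at hi ⊢
    have h1 : ((k : ℤ) + 1 + 1) * (B + 1) = ((k : ℤ) + 1) * (B + 1) + (B + 1) := by ring
    omega


lemma trunc_decomp_pow (v : LaurentSeries K) (B : ℤ) :
    v ^ p = (trunc v B) ^ p + (v - trunc v B) ^ p := by
  conv_lhs => rw [show v = trunc v B + (v - trunc v B) by ring]
  rw [add_pow_char]

lemma tail_pow_coeff_zero (v : LaurentSeries K) (B : ℤ) (m : ℤ) (hm : m ≤ (p : ℤ) * (B + 1) - 1) :
    ((v - trunc v B) ^ p).coeff m = 0 := by
  have h : p - 1 + 1 = p := by have := p2 (p := p); omega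
  have := pow_coeff_zero_of_lb (v - trunc v B) B (fun a ha => tail_coeff_zero v B a ha)
    (p - 1) m (by
      rw [show ((p - 1 : ℕ) : ℤ) + 1 = (p : ℤ) by
        have := p2 (p := p); push_cast [Nat.cast_sub (by omega : 1 ≤ p)]; ring]
      omega)
  rwa [h] at this

lemma trunc_pow_char_coeff (v : LaurentSeries K) (B : ℤ) (j : ℤ) (hj : j ≤ B) :
    ((trunc v B) ^ p).coeff ((p : ℤ) * j) = (v.coeff j) ^ p := by
  have hfin := trunc_support_finite v B
  set t := trunc v B with ht
  have htj : t.coeff j = v.coeff j := by rw [ht, trunc_coeff, if_pos hj]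
  conv_lhs => rw [sum_single_repr t hfin, sum_pow_char]
  have hsingle : ∀ a ∈ hfin.toFinset,
      (HahnSeries.single a (t.coeff a)) ^ p = HahnSeries.single ((p : ℤ) * a) ((t.coeff a) ^ p) := by
    intro a _
    rw [HahnSeries.single_pow, nsmul_eq_mul]
  rw [Finset.sum_congr rfl hsingle, coeff_sum,
    Finset.sum_eq_single j (fun b _ hbj => coeff_single_of_ne (by
      intro hcon
      exact hbj (by
        have hp0 : (p : ℤ) ≠ 0 := by exact_mod_cast (hp.out.ne_zero)
        exact (mul_left_cancel₀ hp0 hcon).symm)))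
    (fun hj' => by
      rw [coeff_single_same]
      have : t.coeff j = 0 := by
        by_contra hc
        exact hj' (hfin.mem_toFinset.mpr hc)
      rw [this, zero_pow hp.out.ne_zero]),
    coeff_single_same, htj]

lemma pow_char_coeff (v : LaurentSeries K) (j : ℤ) :
    (v ^ p).coeff ((p : ℤ) * j) = (v.coeff j) ^ p := by
  set B := max j 0 with hB
  rw [trunc_decomp_pow v B, HahnSeries.coeff_add,
    trunc_pow_char_coeff v B j (le_max_left _ _)]
  have hple : (1 : ℤ) ≤ (p : ℤ) := by exact_mod_cast hp.out.one_lt.le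
  have hmul : (p : ℤ) * j ≤ (p : ℤ) * B :=
    mul_le_mul_of_nonneg_left (le_max_left _ _) (by omega)
  have hring : (p : ℤ) * (B + 1) = (p : ℤ) * B + (p : ℤ) := by ring
  rw [tail_pow_coeff_zero v B _ (by omega), add_zero]

lemma pow_char_coeff_ndvd (v : LaurentSeries K) (m : ℤ) (hm : ¬ ((p : ℤ) ∣ m)) :
    (v ^ p).coeff m = 0 := by
  set B := max m 0 with hB
  rw [trunc_decomp_pow v B, HahnSeries.coeff_add]
  have hfin := trunc_support_finite v B
  set t := trunc v B with ht
  have h2 : (t ^ p).coeff m = 0 := by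
    conv_lhs => rw [sum_single_repr t hfin, sum_pow_char]
    rw [coeff_sum]
    refine Finset.sum_eq_zero fun a _ => ?_
    rw [HahnSeries.single_pow, coeff_single_of_ne (by
      intro hcon
      exact hm ⟨a, by rw [hcon, nsmul_eq_mul]⟩)]
  have hple : (1 : ℤ) ≤ (p : ℤ) := by exact_mod_cast hp.out.one_lt.le
  have hBm : m ≤ B := le_max_left _ _
  have hB0 : (0 : ℤ) ≤ B := le_max_right _ _
  have hmul : (1 : ℤ) * (B + 1) ≤ (p : ℤ) * (B + 1) :=
    mul_le_mul_of_nonneg_right hple (by omega)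
  rw [h2, tail_pow_coeff_zero v B m (by omega), add_zero]

include hder in
lemma exists_antideriv (s : LaurentSeries K)
    (hs : ∀ i : ℤ, ((i + 1 : ℤ) : K) = 0 → s.coeff i = 0) :
    ∃ E, der E = s := by
  obtain ⟨b, hb⟩ := exists_lb s
  refine ⟨mkLS (fun j => ((j : ℤ) : K)⁻¹ * s.coeff (j - 1)) (b + 1) (fun i hi => by
    rw [hb (i - 1) (by omega), mul_zero]), ?_⟩
  ext i
  rw [hder, mkLS_coeff]
  have h1 : i + 1 - 1 = i := by omega
  rw [h1, zsmul_eq_mul]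
  rcases eq_or_ne (((i + 1 : ℤ)) : K) 0 with h | h
  · rw [h, zero_mul, hs i h]
  · rw [← mul_assoc, mul_inv_cancel₀ h, one_mul]


include hder in
lemma der_nsmul (n : ℕ) (u : LaurentSeries K) : der (n • u) = n • der u := by
  induction n with
  | zero => simp [der_zero der hder]
  | succ m ih => rw [succ_nsmul, succ_nsmul, der_add der hder, ih]

include hder in
lemma cross (s t : LaurentSeries K) :
    ∃ Ψ : LaurentSeries K, (s + t) ^ (p - 1) * der (s + t)
      = s ^ (p - 1) * der s + t ^ (p - 1) * der t + der Ψ := by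
  have hp2 : 2 ≤ p := p2
  have hp1 : p - 1 + 1 = p := by omega
  refine ⟨∑ k ∈ Finset.Ico 1 p, (p.choose k / p) • (s ^ k * t ^ (p - k)), ?_⟩
  rw [der_sum der hder]
  have hterm : ∀ k ∈ Finset.Ico 1 p,
      der ((p.choose k / p) • (s ^ k * t ^ (p - k)))
        = (p - 1).choose (k - 1) • (s ^ (k - 1) * t ^ (p - k) * der s)
          + (p - 1).choose k • (s ^ k * t ^ (p - k - 1) * der t) := by
    intro k hk
    rw [Finset.mem_Ico] at hk
    obtain ⟨hk1, hk2⟩ := hk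
    obtain ⟨q, hq⟩ : p ∣ p.choose k := hp.out.dvd_choose_self (by omega) hk2
    have hqv : p.choose k / p = q := by rw [hq, Nat.mul_div_cancel_left _ ppos]
    have hk1' : k - 1 + 1 = k := by omega
    have hds : der (s ^ k) = k • (s ^ (k - 1) * der s) := by
      conv_lhs => rw [← hk1']
      rw [der_pow der hder, hk1']
    have hpk : p - k = (p - k - 1) + 1 := by omega
    have hdt : der (t ^ (p - k)) = (p - k) • (t ^ (p - k - 1) * der t) := by
      conv_lhs => rw [hpk]
      rw [der_pow der hder, ← hpk]
    have hc1 : q * k = (p - 1).choose (k - 1) := by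
      have h := Nat.add_one_mul_choose_eq (p - 1) (k - 1)
      rw [hp1, hk1'] at h
      -- h : p * (p-1).choose (k-1) = p.choose k * k
      rw [hq, mul_assoc] at h
      exact (Nat.eq_of_mul_eq_mul_left ppos h).symm
    have hc2 : q * (p - k) = (p - 1).choose k := by
      have h := Nat.choose_mul_succ_eq (p - 1) k
      rw [hp1] at h
      -- h : (p-1).choose k * p = p.choose k * (p - k)
      rw [hq, mul_assoc, mul_comm ((p-1).choose k) p] at h
      exact (Nat.eq_of_mul_eq_mul_left ppos h).symm
    rw [der_nsmul der hder, der_mul der hder, hds, hdt, hqv, ← hc1, ← hc2]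
    simp only [nsmul_eq_mul, Nat.cast_mul]
    ring
  rw [Finset.sum_congr rfl hterm, Finset.sum_add_distrib]
  have hexp : (s + t) ^ (p - 1)
      = ∑ i ∈ Finset.range p, (p - 1).choose i • (s ^ i * t ^ (p - 1 - i)) := by
    rw [add_pow, hp1]
    refine Finset.sum_congr rfl fun i _ => ?_
    rw [nsmul_eq_mul]; ring
  rw [hexp, der_add der hder, Finset.sum_mul]
  have hsplit : ∀ i ∈ Finset.range p,
      (p - 1).choose i • (s ^ i * t ^ (p - 1 - i)) * (der s + der t)
        = (p - 1).choose i • (s ^ i * t ^ (p - 1 - i) * der s)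
          + (p - 1).choose i • (s ^ i * t ^ (p - 1 - i) * der t) := by
    intro i _
    simp only [nsmul_eq_mul]; ring
  rw [Finset.sum_congr rfl hsplit, Finset.sum_add_distrib]
  have hT1 : ∑ i ∈ Finset.range p, (p - 1).choose i • (s ^ i * t ^ (p - 1 - i) * der s)
      = s ^ (p - 1) * der s
        + ∑ k ∈ Finset.Ico 1 p, (p - 1).choose (k - 1) • (s ^ (k - 1) * t ^ (p - k) * der s) := by
    have h1 : ∑ k ∈ Finset.Ico 1 p, (p - 1).choose (k - 1) • (s ^ (k - 1) * t ^ (p - k) * der s)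
        = ∑ i ∈ Finset.range (p - 1), (p - 1).choose i • (s ^ i * t ^ (p - 1 - i) * der s) := by
      rw [Finset.sum_Ico_eq_sum_range]
      refine Finset.sum_congr rfl fun i hi => ?_
      have e1 : 1 + i - 1 = i := by omega
      have e2 : p - (1 + i) = p - 1 - i := by omega
      rw [e1, e2]
    rw [h1]
    conv_lhs => rw [← hp1, Finset.sum_range_succ]
    simp only [Nat.add_sub_cancel]
    rw [Nat.choose_self, Nat.sub_self, pow_zero, mul_one, one_smul]
    ring
  have hT2 : ∑ i ∈ Finset.range p, (p - 1).choose i • (s ^ i * t ^ (p - 1 - i) * der t)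
      = t ^ (p - 1) * der t
        + ∑ k ∈ Finset.Ico 1 p, (p - 1).choose k • (s ^ k * t ^ (p - k - 1) * der t) := by
    rw [Finset.range_eq_Ico, Finset.sum_eq_sum_Ico_succ_bot (by omega : 0 < p)]
    rw [Nat.choose_zero_right, pow_zero, one_mul, one_smul, Nat.sub_zero]
    congr 1
    refine Finset.sum_congr rfl fun k hk => ?_
    have e : p - 1 - k = p - k - 1 := by omega
    rw [e]
  rw [hT1, hT2]
  ring


include hder in
lemma crux0_finite (S : Finset ℤ) (c : ℤ → K) (j : ℤ) :
    ((∑ a ∈ S, HahnSeries.single a (c a)) ^ (p - 1)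
        * der (∑ a ∈ S, HahnSeries.single a (c a))).coeff ((p : ℤ) * j + ((p : ℤ) - 1))
      = ((der (∑ a ∈ S, HahnSeries.single a (c a))).coeff j) ^ p := by
  classical
  have hp2 : 2 ≤ p := p2
  have hp0 : (p : ℤ) ≠ 0 := by exact_mod_cast hp.out.ne_zero
  induction S using Finset.cons_induction with
  | empty =>
    simp only [Finset.sum_empty]
    rw [der_zero der hder]
    simp [zero_pow hp.out.ne_zero]
  | cons a S ha ih =>
    rw [Finset.sum_cons]
    obtain ⟨Ψ, hΨ⟩ := cross (p := p) der hder (HahnSeries.single a (c a)) (∑ b ∈ S, HahnSeries.single b (c b))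
    rw [hΨ, HahnSeries.coeff_add, HahnSeries.coeff_add]
    have hres : (der Ψ).coeff ((p : ℤ) * j + ((p : ℤ) - 1)) = 0 := by
      apply der_res der hder
      rw [show (p : ℤ) * j + ((p : ℤ) - 1) + 1 = (p : ℤ) * (j + 1) by ring]
      push_cast
      rw [CharP.cast_eq_zero K p, zero_mul]
    rw [hres, add_zero]
    have hsingle : (HahnSeries.single a (c a)) ^ (p - 1) * der (HahnSeries.single a (c a))
        = HahnSeries.single ((p : ℤ) * a - 1) ((a : K) * (c a) ^ p) := by
      rw [der_single der hder, HahnSeries.single_pow, HahnSeries.single_mul_single]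
      congr 1
      · rw [nsmul_eq_mul]
        push_cast [Nat.cast_sub (by omega : 1 ≤ p)]
        ring
      · rw [zsmul_eq_mul]
        calc (c a) ^ (p - 1) * ((a : K) * c a) = (a : K) * ((c a) ^ (p - 1) * c a) := by ring
        _ = (a : K) * (c a) ^ p := by
            rw [← pow_succ, show p - 1 + 1 = p by omega]
    rw [hsingle, ih, der_add der hder, HahnSeries.coeff_add, der_single der hder, add_pow_char]
    congr 1
    rcases eq_or_ne a (j + 1) with he | he
    · rw [show (p : ℤ) * j + ((p : ℤ) - 1) = (p : ℤ) * a - 1 by rw [he]; ring,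
        coeff_single_same,
        show j = a - 1 by omega, coeff_single_same, zsmul_eq_mul, mul_pow, intCast_pow_char]
    · rw [coeff_single_of_ne (by
        intro hcon
        have h3 : (p : ℤ) * a = (p : ℤ) * (j + 1) := by linear_combination -hcon
        exact he (mul_left_cancel₀ hp0 h3)),
        coeff_single_of_ne (by intro hcon; exact he (by omega)),
        zero_pow hp.out.ne_zero]

include hder in
lemma crux0 (G : LaurentSeries K) (j : ℤ) :
    (G ^ (p - 1) * der G).coeff ((p : ℤ) * j + ((p : ℤ) - 1)) = ((der G).coeff j) ^ p := by
  have hp2 : 2 ≤ p := p2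
  have hple : (1 : ℤ) ≤ (p : ℤ) := by exact_mod_cast hp.out.one_lt.le
  set m : ℤ := (p : ℤ) * j + ((p : ℤ) - 1) with hm
  set B : ℤ := max (max (j + 1) (m + 1)) 0 with hB
  set tG := trunc G B with htG
  set w := G - tG with hw
  have hGtw : G = tG + w := by rw [hw]; ring
  have hwcoeff : ∀ a, a ≤ B → w.coeff a = 0 := fun a ha => tail_coeff_zero G B a ha
  obtain ⟨Ψ, hΨ⟩ := cross (p := p) der hder tG w
  have hfin := trunc_support_finite G B
  have hjB : j + 1 ≤ B := le_trans (le_max_left _ _) (le_max_left _ _)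
  have hmB : m + 1 ≤ B := le_trans (le_max_right _ _) (le_max_left _ _)
  have hB0 : (0 : ℤ) ≤ B := le_max_right _ _
  have hΦw : (w ^ (p - 1) * der w).coeff m = 0 := by
    have hwp : ∀ i, i ≤ ((p : ℤ) - 1) * (B + 1) - 1 → (w ^ (p - 1)).coeff i = 0 := by
      intro i hi
      have h := pow_coeff_zero_of_lb w B hwcoeff (p - 2) i (by
        rw [show ((p - 2 : ℕ) : ℤ) + 1 = (p : ℤ) - 1 by
          push_cast [Nat.cast_sub (by omega : 2 ≤ p)]; ring]
        exact hi)
      rwa [show p - 2 + 1 = p - 1 by omega] at h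
    have hdw : ∀ i, i ≤ B - 1 → (der w).coeff i = 0 := by
      intro i hi
      rw [hder, hwcoeff (i + 1) (by omega), smul_zero]
    have hnn : (0 : ℤ) ≤ ((p : ℤ) - 1) * (B + 1) := mul_nonneg (by omega) (by omega)
    exact mul_coeff_zero_of_lb _ _ _ _ hwp hdw m (by omega)
  have hres : (der Ψ).coeff m = 0 := by
    apply der_res der hder
    rw [show m + 1 = (p : ℤ) * (j + 1) by rw [hm]; ring]
    push_cast
    rw [CharP.cast_eq_zero K p, zero_mul]
  have hderw : (der w).coeff j = 0 := by rw [hder, hwcoeff (j + 1) hjB, smul_zero]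
  rw [hGtw, hΨ, HahnSeries.coeff_add, HahnSeries.coeff_add, hΦw, hres, add_zero, add_zero,
    der_add der hder, HahnSeries.coeff_add, hderw, add_zero]
  have hfini := crux0_finite (p := p) der hder hfin.toFinset tG.coeff j
  rw [← sum_single_repr tG hfin] at hfini
  exact hfini

include hder in
lemma crux (G : LaurentSeries K) (k : ℕ) :
    ∃ E, (G ^ (p ^ k - 1) * der G) ^ p * HahnSeries.single ((p : ℤ) - 1) (1 : K)
      = G ^ (p ^ (k + 1) - 1) * der G + der E := by
  have hple := p2 (p := p)
  have hpk : 1 ≤ p ^ k := Nat.one_le_pow _ _ ppos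
  have hpk1 : p ^ (k + 1) = p ^ k * p := pow_succ p k
  have hplep : p ≤ p ^ k * p := Nat.le_mul_of_pos_left p (by positivity)
  set W := G ^ (p ^ k - 1) with hW
  set D0 := (der G) ^ p * HahnSeries.single ((p : ℤ) - 1) (1 : K) - G ^ (p - 1) * der G with hD0
  have hkey : (G ^ (p ^ k - 1) * der G) ^ p * HahnSeries.single ((p : ℤ) - 1) 1
      - G ^ (p ^ (k + 1) - 1) * der G = W ^ p * D0 := by
    have hWp : (G ^ (p ^ k - 1)) ^ p * G ^ (p - 1) = G ^ (p ^ (k + 1) - 1) := by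
      rw [← pow_mul, ← _root_.pow_add]
      congr 1
      have hsm : (p ^ k - 1) * p = p ^ k * p - 1 * p := Nat.sub_mul _ _ _
      omega
    rw [hD0, hW, mul_pow, ← hWp]
    ring
  have hD0res : ∀ i : ℤ, ((i + 1 : ℤ) : K) = 0 → D0.coeff i = 0 := by
    intro i hi
    obtain ⟨jj, hjj⟩ : (p : ℤ) ∣ (i + 1) := (CharP.intCast_eq_zero_iff K p _).mp hi
    have he : (p : ℤ) * (jj - 1) = (p : ℤ) * jj - (p : ℤ) := by ring
    have hidx : i = (p : ℤ) * (jj - 1) + ((p : ℤ) - 1) := by omega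
    rw [hD0, HahnSeries.coeff_sub, hidx, crux0 der hder G (jj - 1)]
    have h1 : ((der G) ^ p * HahnSeries.single ((p : ℤ) - 1) (1 : K)).coeff
        ((p : ℤ) * (jj - 1) + ((p : ℤ) - 1)) = ((der G) ^ p).coeff ((p : ℤ) * (jj - 1)) := by
      rw [HahnSeries.coeff_mul_single_add, mul_one]
    rw [h1, pow_char_coeff (der G) (jj - 1), sub_self]
  have hprod : ∀ i : ℤ, ((i + 1 : ℤ) : K) = 0 → (W ^ p * D0).coeff i = 0 := by
    intro i hi
    rw [HahnSeries.coeff_mul]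
    refine Finset.sum_eq_zero fun q hq => ?_
    rw [Finset.mem_addAntidiagonal] at hq
    obtain ⟨h1, h2, h3⟩ := hq
    by_cases hdvd : (p : ℤ) ∣ q.1
    · have hq2 : ((q.2 + 1 : ℤ) : K) = 0 := by
        obtain ⟨u, hu⟩ := hdvd
        rw [show (q.2 + 1 : ℤ) = (i + 1) - (p : ℤ) * u by omega]
        push_cast
        push_cast at hi
        rw [hi, CharP.cast_eq_zero K p]
        ring
      rw [hD0res q.2 hq2, mul_zero]
    · rw [pow_char_coeff_ndvd W q.1 hdvd, zero_mul]
  obtain ⟨E, hE⟩ := exists_antideriv der hder (W ^ p * D0) hprod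
  refine ⟨E, ?_⟩
  rw [hE, ← hkey]
  ring


lemma hXp : ((HahnSeries.single (-1 : ℤ) (1 : K)) ^ p) * HahnSeries.single ((p : ℤ) - 1) 1
    = HahnSeries.single (-1 : ℤ) 1 := by
  rw [HahnSeries.single_pow, one_pow, nsmul_eq_mul, HahnSeries.single_mul_single, mul_one]
  congr 1
  ring

include hder in
lemma aux : ∀ (n : ℕ) (v : LaurentSeries K), (∀ i : ℤ, ∃ c : K, v.coeff i = c ^ (p ^ n)) →
    ∃ (F : Fin n → LaurentSeries K) (h : LaurentSeries K),
      v * HahnSeries.single (-1 : ℤ) 1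
        = (∑ i : Fin n, (F i) ^ (p ^ (i : ℕ) - 1) * der (F i))
          + h ^ (p ^ n) * HahnSeries.single ((p : ℤ) ^ n) 1 * HahnSeries.single (-1 : ℤ) 1 := by
  classical
  intro n
  induction n with
  | zero =>
    intro v hv
    refine ⟨fun i => i.elim0, v * HahnSeries.single (-1 : ℤ) 1, ?_⟩
    rw [Finset.univ_eq_empty, Finset.sum_empty, zero_add, pow_zero, pow_one, pow_zero,
      mul_assoc, HahnSeries.single_mul_single, mul_one]
    norm_num [HahnSeries.single_zero_one]
  | succ n ihn =>
    intro v hv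
    have hp2 : 2 ≤ p := p2
    have hp0 : (p : ℤ) ≠ 0 := by exact_mod_cast hp.out.ne_zero
    have hpn1 : p ^ (n + 1) ≠ 0 := pow_ne_zero _ hp.out.ne_zero
    set ω := v * HahnSeries.single (-1 : ℤ) 1 with hω
    have hωc : ∀ i : ℤ, ω.coeff i = v.coeff (i + 1) := by
      intro i
      conv_lhs => rw [hω, show i = (i + 1) + (-1 : ℤ) by ring]
      rw [HahnSeries.coeff_mul_single_add, mul_one]
    set r := restrict ω (fun i => ((i + 1 : ℤ) : K) = 0) with hr
    have hrc : ∀ i, r.coeff i = if ((i + 1 : ℤ) : K) = 0 then ω.coeff i else 0 := by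
      intro i
      rw [hr, restrict_coeff]
    obtain ⟨E0, hE0⟩ := exists_antideriv der hder (ω - r) (by
      intro i hi
      rw [HahnSeries.coeff_sub, hrc i, if_pos hi, sub_self])
    have hvvb : ∃ b : ℤ, ∀ jj : ℤ, jj < b →
        (Classical.choose (hv ((p : ℤ) * jj))) ^ (p ^ n) = 0 := by
      obtain ⟨b, hb⟩ := exists_lb v
      refine ⟨min b 0, fun jj hjj => ?_⟩
      have hz : v.coeff ((p : ℤ) * jj) = 0 := by
        apply hb
        have h2 : ((p : ℤ) - 1) * jj ≤ 0 := by
          have hmr := min_le_right b (0 : ℤ)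
          exact mul_nonpos_of_nonneg_of_nonpos (by omega) (by omega)
        have h3 : (p : ℤ) * jj = jj + ((p : ℤ) - 1) * jj := by ring
        have hml := min_le_left b (0 : ℤ)
        omega
      have hc0 : Classical.choose (hv ((p : ℤ) * jj)) = 0 := by
        have h4 := (Classical.choose_spec (hv ((p : ℤ) * jj)))
        exact (pow_eq_zero_iff hpn1).mp (h4.symm.trans hz)
      rw [hc0, zero_pow (pow_ne_zero _ hp.out.ne_zero)]
    obtain ⟨bv, hbv⟩ := hvvb
    set vv : LaurentSeries K :=
      mkLS (fun jj => (Classical.choose (hv ((p : ℤ) * jj))) ^ (p ^ n)) bv hbv with hvv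
    have hvvp : ∀ jj : ℤ, (vv.coeff jj) ^ p = v.coeff ((p : ℤ) * jj) := by
      intro jj
      simp only [hvv, mkLS_coeff]
      rw [← pow_mul, ← pow_succ]
      exact (Classical.choose_spec (hv ((p : ℤ) * jj))).symm
    have hvvpow : ∀ i : ℤ, ∃ c : K, vv.coeff i = c ^ (p ^ n) := fun i => ⟨_, rfl⟩
    obtain ⟨G, g, hG⟩ := ihn vv hvvpow
    have hrvv : r = vv ^ p * HahnSeries.single (-1 : ℤ) 1 := by
      ext i
      have hco : (vv ^ p * HahnSeries.single (-1 : ℤ) 1).coeff i = (vv ^ p).coeff (i + 1) := by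
        conv_lhs => rw [show i = (i + 1) + (-1 : ℤ) by ring]
        rw [HahnSeries.coeff_mul_single_add, mul_one]
      rw [hrc i, hco]
      by_cases hi : ((i + 1 : ℤ) : K) = 0
      · rw [if_pos hi]
        obtain ⟨jj, hjj⟩ := (CharP.intCast_eq_zero_iff K p _).mp hi
        rw [hωc i, hjj, pow_char_coeff vv jj, hvvp jj]
      · rw [if_neg hi,
          pow_char_coeff_ndvd vv (i + 1) (fun hd => hi ((CharP.intCast_eq_zero_iff K p _).mpr hd))]
    choose Ecr hEcr using fun i : Fin n => crux (p := p) der hder (G i) (i : ℕ)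
    refine ⟨fun i => Fin.cases (E0 + ∑ k : Fin n, Ecr k) G i, g, ?_⟩
    have hgterm : (g ^ p ^ n * HahnSeries.single ((p : ℤ) ^ n) 1
          * HahnSeries.single (-1 : ℤ) 1) ^ p * HahnSeries.single ((p : ℤ) - 1) 1
        = g ^ p ^ (n + 1) * HahnSeries.single ((p : ℤ) ^ (n + 1)) 1
          * HahnSeries.single (-1 : ℤ) 1 := by
      rw [mul_pow, mul_pow, mul_assoc, hXp, ← pow_mul, ← pow_succ,
        HahnSeries.single_pow, one_pow, nsmul_eq_mul, ← pow_succ']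
    have hmain : ω = der E0 + (∑ k : Fin n, der (Ecr k))
        + (∑ i : Fin n, (G i) ^ (p ^ ((i : ℕ) + 1) - 1) * der (G i))
        + g ^ p ^ (n + 1) * HahnSeries.single ((p : ℤ) ^ (n + 1)) 1
          * HahnSeries.single (-1 : ℤ) 1 := by
      have h1 : ω = der E0 + r := by rw [hE0]; ring
      rw [h1, hrvv,
        show vv ^ p * HahnSeries.single (-1 : ℤ) 1
          = (vv * HahnSeries.single (-1 : ℤ) 1) ^ p * HahnSeries.single ((p : ℤ) - 1) 1 by
            rw [mul_pow, mul_assoc, hXp],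
        hG, add_pow_char, sum_pow_char, add_mul, Finset.sum_mul, hgterm,
        Finset.sum_congr rfl (fun i _ => hEcr i), Finset.sum_add_distrib]
      ring
    rw [hmain, Fin.sum_univ_succ]
    simp only [Fin.cases_zero, Fin.cases_succ, Fin.val_zero, Fin.val_succ, pow_zero]
    rw [der_add der hder, der_sum der hder]
    norm_num

end LaurentBn

set_option linter.unusedSectionVars true

/-- Let `K` be a field of characteristic `p`, `K((x))` the Laurent series field with its formal
derivative `der` (1-forms `f·dx` identified with their coefficient `f`), and let
`f(x) ∈ K^{p^n}((x))`, i.e. all coefficients of `f` are `p^n`-th powers.  Then the form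
`ω = f(x) dx` can be written as
`ω = d(f₁) + f₂^{p-1} d(f₂) + ⋯ + f_n^{p^{n-1}-1} d(f_n) + h(x)^{p^n} x^{p^n} dlog(x)`
for some `f₁, …, f_n, h ∈ K((x))`. -/
theorem laurent_Bn_decomposition (p n : ℕ) [Fact p.Prime] (K : Type*) [Field K] [CharP K p]
    (der : LaurentSeries K → LaurentSeries K)
    (hder : ∀ (f : LaurentSeries K) (i : ℤ), (der f).coeff i = (i + 1) • f.coeff (i + 1))
    (f : LaurentSeries K) (hf : ∀ i : ℤ, ∃ c : K, f.coeff i = c ^ (p ^ n)) :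
    ∃ (F : Fin n → LaurentSeries K) (h : LaurentSeries K),
      f = (∑ i : Fin n, (F i) ^ (p ^ (i : ℕ) - 1) * der (F i)) +
        h ^ (p ^ n) * (lsVar K) ^ (p ^ n) * (lsVar K)⁻¹ := by
  classical
  obtain ⟨F, h, hFh⟩ := LaurentBn.aux der hder n (f * lsVar K) (fun i => by
    have hco : (f * lsVar K).coeff i = f.coeff (i - 1) := by
      conv_lhs => rw [show i = (i - 1) + (1 : ℤ) by ring]
      rw [lsVar, HahnSeries.coeff_mul_single_add, mul_one]
    rw [hco]
    exact hf (i - 1))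
  have hX : (lsVar K) * HahnSeries.single (-1 : ℤ) 1 = 1 := by
    rw [lsVar, HahnSeries.single_mul_single, mul_one]
    norm_num [HahnSeries.single_zero_one]
  have hXinv : (lsVar K)⁻¹ = HahnSeries.single (-1 : ℤ) 1 := inv_eq_of_mul_eq_one_right hX
  have hXpow : (lsVar K) ^ (p ^ n) = HahnSeries.single ((p : ℤ) ^ n) 1 := by
    rw [lsVar, HahnSeries.single_pow, one_pow, nsmul_eq_mul, mul_one]
    norm_num
  refine ⟨F, h, ?_⟩
  rw [hXinv, hXpow]
  calc f = f * lsVar K * HahnSeries.single (-1 : ℤ) 1 := by rw [mul_assoc, hX, mul_one]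
  _ = _ := hFh
end
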